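/- arXiv:1510.00038 — 5 statements merged into one kernel-verified Lean document; each statement's English description precedes it below -/
import Mathlib

section
/- Let 1 < p < ∞ and let Q₀ ⊂ ℝⁿ be a fixed cube. If f ∈ L¹(Q₀) has finite John–Nirenberg norm ‖f‖_{JN_p(Q₀)}, then f ∈ GaRo_p(Q₀) and ‖f‖_{GaRo_p(Q₀)} ≤ 2 ‖f‖_{JN_p(Q₀)}. -/
open MeasureTheory ENNReal Set

noncomputable section

/-- An axis-parallel cube in `ℝⁿ` with positive side length. -/
structure Cube (n : ℕ) where
  corner : Fin n → ℝ
  side : ℝ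
  side_pos : 0 < side

namespace Cube

/-- The cube as a subset of `ℝⁿ`. -/
def toSet {n : ℕ} (Q : Cube n) : Set (Fin n → ℝ) :=
  Set.univ.pi fun i => Set.Icc (Q.corner i) (Q.corner i + Q.side)

/-- The volume `|Q| = l(Q)ⁿ` of the cube. -/
def vol {n : ℕ} (Q : Cube n) : ℝ := Q.side ^ n

/-- The average `f_Q = (1/|Q|) ∫_Q f`. -/
def avg {n : ℕ} (Q : Cube n) (f : (Fin n → ℝ) → ℝ) : ℝ :=
  (∫ x in Q.toSet, f x) / Q.vol

end Cube

/-- A countable family of subcubes of `Q₀` (indexed by `s ⊆ ℕ`) with pairwise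
disjoint interiors: an element of `P(Q₀)`. -/
def IsPackedFamily {n : ℕ} (Q₀ : Cube n) (s : Set ℕ) (Q : ℕ → Cube n) : Prop :=
  (∀ i ∈ s, (Q i).toSet ⊆ Q₀.toSet) ∧
  s.Pairwise fun i j => Disjoint (interior (Q i).toSet) (interior (Q j).toSet)

/-- `Σ_i (1/|Q_i|) ∫_{Q_i} ∫_{Q_i} |f(x) - f(y)| dx dy`. -/
def garoSum {n : ℕ} (f : (Fin n → ℝ) → ℝ) (s : Set ℕ) (Q : ℕ → Cube n) : ℝ≥0∞ :=
  ∑' i : s, (ENNReal.ofReal (Q (i : ℕ)).vol)⁻¹ *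
    ∫⁻ x in (Q (i : ℕ)).toSet, ∫⁻ y in (Q (i : ℕ)).toSet, (‖f x - f y‖₊ : ℝ≥0∞)

/-- The Garsia–Rodemich norm `‖f‖_{GaRo_p(Q₀)}`: the least constant `C` such that
`Σ_i (1/|Q_i|) ∫∫ |f(x)-f(y)| ≤ C (Σ_i |Q_i|)^{1/p'}` for all families in `P(Q₀)`. -/
def garoNorm {n : ℕ} (p : ℝ) (Q₀ : Cube n) (f : (Fin n → ℝ) → ℝ) : ℝ≥0∞ :=
  sInf {C : ℝ≥0∞ | ∀ s Q, IsPackedFamily Q₀ s Q →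
    garoSum f s Q ≤ C * (∑' i : s, ENNReal.ofReal (Q (i : ℕ)).vol) ^ (1 - 1/p)}

/-- The Garsia–Rodemich norm `‖f‖_{GaRo_∞(Q₀)}` (the case `p = ∞`, `1/p' = 1`). -/
def garoNormInf {n : ℕ} (Q₀ : Cube n) (f : (Fin n → ℝ) → ℝ) : ℝ≥0∞ :=
  sInf {C : ℝ≥0∞ | ∀ s Q, IsPackedFamily Q₀ s Q →
    garoSum f s Q ≤ C * ∑' i : s, ENNReal.ofReal (Q (i : ℕ)).vol}

/-- The John–Nirenberg norm `‖f‖_{JN_p(Q₀)}`. -/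
def jnNorm {n : ℕ} (p : ℝ) (Q₀ : Cube n) (f : (Fin n → ℝ) → ℝ) : ℝ≥0∞ :=
  ⨆ (s : Set ℕ) (Q : ℕ → Cube n) (_ : IsPackedFamily Q₀ s Q),
    (∑' i : s, ENNReal.ofReal (Q (i : ℕ)).vol *
      ((ENNReal.ofReal (Q (i : ℕ)).vol)⁻¹ *
        ∫⁻ x in (Q (i : ℕ)).toSet, (‖f x - (Q (i : ℕ)).avg f‖₊ : ℝ≥0∞)) ^ p) ^ (1/p)

/-- The non-increasing rearrangement `f*(t)` of `f` with respect to `μ`. -/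
def rearr {α : Type*} [MeasurableSpace α] (μ : Measure α) (f : α → ℝ) (t : ℝ) : ℝ≥0∞ :=
  sInf {l : ℝ≥0∞ | μ {x | l < (‖f x‖₊ : ℝ≥0∞)} ≤ ENNReal.ofReal t}

/-- The maximal function of the rearrangement, `f**(t) = (1/t) ∫₀ᵗ f*(s) ds`. -/
def rearr2 {α : Type*} [MeasurableSpace α] (μ : Measure α) (f : α → ℝ) (t : ℝ) : ℝ≥0∞ :=
  (ENNReal.ofReal t)⁻¹ * ∫⁻ s in Set.Ioc (0 : ℝ) t, rearr μ f s

/-- The Marcinkiewicz weak-`L^p` quasinorm `‖f‖*_{L(p,∞)} = sup_{t>0} t^{1/p} f*(t)`. -/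
def weakNorm {α : Type*} [MeasurableSpace α] (μ : Measure α) (p : ℝ) (f : α → ℝ) : ℝ≥0∞ :=
  ⨆ t ∈ Set.Ioi (0 : ℝ), ENNReal.ofReal t ^ (1/p) * rearr μ f t

/-- The `BMO` seminorm `sup_{Q ⊆ Q₀} (1/|Q|) ∫_Q |f - f_Q|`. -/
def bmoSup {n : ℕ} (Q₀ : Cube n) (f : (Fin n → ℝ) → ℝ) : ℝ≥0∞ :=
  ⨆ (Q : Cube n) (_ : Q.toSet ⊆ Q₀.toSet),
    (ENNReal.ofReal Q.vol)⁻¹ * ∫⁻ x in Q.toSet, (‖f x - Q.avg f‖₊ : ℝ≥0∞)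

/-- `‖f‖_* = sup_{Q ⊆ Q₀} (1/|Q|²) ∫_Q ∫_Q |f(x) - f(y)| dx dy`. -/
def starSup {n : ℕ} (Q₀ : Cube n) (f : (Fin n → ℝ) → ℝ) : ℝ≥0∞ :=
  ⨆ (Q : Cube n) (_ : Q.toSet ⊆ Q₀.toSet),
    ((ENNReal.ofReal Q.vol) ^ 2)⁻¹ *
      ∫⁻ x in Q.toSet, ∫⁻ y in Q.toSet, (‖f x - f y‖₊ : ℝ≥0∞)

/-- `g` is an upper gradient of `f` on `Q₀` with constant `c`, in the `S_p` sense: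
`(1/|Q|) ∫_Q |f - f_Q| ≤ c l(Q) ((1/|Q|) ∫_Q |g|^p)^{1/p}` for every subcube `Q ⊆ Q₀`. -/
def UpperGradient {n : ℕ} (Q₀ : Cube n) (p : ℝ) (f g : (Fin n → ℝ) → ℝ) (c : ℝ) : Prop :=
  ∀ Q : Cube n, Q.toSet ⊆ Q₀.toSet →
    (ENNReal.ofReal Q.vol)⁻¹ * ∫⁻ x in Q.toSet, (‖f x - Q.avg f‖₊ : ℝ≥0∞) ≤
      ENNReal.ofReal (c * Q.side) *
        ((ENNReal.ofReal Q.vol)⁻¹ * ∫⁻ x in Q.toSet, (‖g x‖₊ : ℝ≥0∞) ^ p) ^ (1/p)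


lemma Cube.volume_toSet {n : ℕ} (Q : Cube n) :
    volume Q.toSet = ENNReal.ofReal Q.vol := by
  rw [Cube.toSet, volume_pi_pi]
  simp [Real.volume_Icc, Cube.vol, ← ENNReal.ofReal_pow Q.side_pos.le]

lemma Cube.vol_pos {n : ℕ} (Q : Cube n) : 0 < Q.vol := pow_pos Q.side_pos n

lemma Cube.ofReal_vol_ne_zero {n : ℕ} (Q : Cube n) :
    ENNReal.ofReal Q.vol ≠ 0 := (ENNReal.ofReal_pos.2 Q.vol_pos).ne'

lemma double_bound {n : ℕ} (Q : Cube n) (f : (Fin n → ℝ) → ℝ) :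
    (∫⁻ x in Q.toSet, ∫⁻ y in Q.toSet, (‖f x - f y‖₊ : ℝ≥0∞)) ≤
      2 * ENNReal.ofReal Q.vol *
        ∫⁻ x in Q.toSet, (‖f x - Q.avg f‖₊ : ℝ≥0∞) := by
  set a := Q.avg f with ha
  set v := ENNReal.ofReal Q.vol with hv
  set I := ∫⁻ x in Q.toSet, (‖f x - a‖₊ : ℝ≥0∞) with hI
  have hμ : volume Q.toSet = v := Q.volume_toSet
  have step1 : ∀ x, (∫⁻ y in Q.toSet, (‖f x - f y‖₊ : ℝ≥0∞)) ≤
      (‖f x - a‖₊ : ℝ≥0∞) * v + I := by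
    intro x
    have : (∫⁻ y in Q.toSet, (‖f x - f y‖₊ : ℝ≥0∞)) ≤
        ∫⁻ y in Q.toSet, ((‖f x - a‖₊ : ℝ≥0∞) + (‖f y - a‖₊ : ℝ≥0∞)) := by
      refine lintegral_mono fun y => ?_
      have h1 : ‖f x - f y‖₊ ≤ ‖f x - a‖₊ + ‖f y - a‖₊ := by
        have : f x - f y = (f x - a) - (f y - a) := by ring
        rw [this]
        exact nnnorm_sub_le _ _
      rw [← ENNReal.coe_add]
      exact ENNReal.coe_le_coe.2 h1
    refine this.trans ?_
    rw [lintegral_add_left measurable_const, setLIntegral_const, hμ]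
  have step2 : (∫⁻ x in Q.toSet, ∫⁻ y in Q.toSet, (‖f x - f y‖₊ : ℝ≥0∞)) ≤
      ∫⁻ x in Q.toSet, ((‖f x - a‖₊ : ℝ≥0∞) * v + I) := lintegral_mono step1
  refine step2.trans ?_
  rw [lintegral_add_right _ measurable_const,
    lintegral_mul_const' v _ ENNReal.ofReal_ne_top, setLIntegral_const, hμ]
  rw [show I * v + I * v = 2 * v * I by ring]

lemma tsum_holder {ι : Type*} [Countable ι] [MeasurableSpace ι]
    [MeasurableSingletonClass ι] (g h : ι → ℝ≥0∞) {p q : ℝ}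
    (hpq : Real.HolderConjugate p q) :
    ∑' i, g i * h i ≤ (∑' i, g i ^ p) ^ (1/p) * (∑' i, h i ^ q) ^ (1/q) := by
  have := ENNReal.lintegral_mul_le_Lp_mul_Lq Measure.count hpq
    (f := g) (g := h) Measurable.of_discrete.aemeasurable
    Measurable.of_discrete.aemeasurable
  simpa [lintegral_count] using this

/-- For `1 < p < ∞` and a cube `Q₀ ⊆ ℝⁿ`, if `f ∈ L¹(Q₀)` has finite
John–Nirenberg norm, then `f ∈ GaRo_p(Q₀)` with `‖f‖_{GaRo_p} ≤ 2 ‖f‖_{JN_p}`. -/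
theorem jn_subset_garo {n : ℕ} (p : ℝ) (hp : 1 < p) (Q₀ : Cube n)
    (f : (Fin n → ℝ) → ℝ) (hf : IntegrableOn f Q₀.toSet)
    (hJN : jnNorm p Q₀ f < ⊤) :
    garoNorm p Q₀ f < ⊤ ∧ garoNorm p Q₀ f ≤ 2 * jnNorm p Q₀ f := by
  set J := jnNorm p Q₀ f with hJ
  have hq : p.HolderConjugate (Real.conjExponent p) :=
    Real.HolderConjugate.conjExponent hp
  set q := Real.conjExponent p with hqdef
  have h1q : 1/q = 1 - 1/p := by
    have := hq.inv_add_inv_eq_one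
    rw [one_div, one_div]; linarith
  have hmem : (2 * J) ∈ {C : ℝ≥0∞ | ∀ s Q, IsPackedFamily Q₀ s Q →
      garoSum f s Q ≤ C * (∑' i : s, ENNReal.ofReal (Q (i : ℕ)).vol) ^ (1 - 1/p)} := by
    intro s Q hPQ
    set v : s → ℝ≥0∞ := fun i => ENNReal.ofReal (Q (i : ℕ)).vol with hvdef
    set A : s → ℝ≥0∞ := fun i => (v i)⁻¹ *
      ∫⁻ x in (Q (i : ℕ)).toSet, (‖f x - (Q (i : ℕ)).avg f‖₊ : ℝ≥0∞) with hAdef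
    have hv0 : ∀ i, v i ≠ 0 := fun i => (Q (i : ℕ)).ofReal_vol_ne_zero
    have hvtop : ∀ i, v i ≠ ⊤ := fun i => ENNReal.ofReal_ne_top
    have hterm : ∀ i : s, (v i)⁻¹ *
        (∫⁻ x in (Q (i : ℕ)).toSet, ∫⁻ y in (Q (i : ℕ)).toSet, (‖f x - f y‖₊ : ℝ≥0∞)) ≤
        2 * (v i * A i) := by
      intro i
      have := double_bound (Q (i : ℕ)) f
      calc (v i)⁻¹ * _ ≤ (v i)⁻¹ * (2 * v i *
            ∫⁻ x in (Q (i : ℕ)).toSet, (‖f x - (Q (i : ℕ)).avg f‖₊ : ℝ≥0∞)) :=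
            mul_le_mul_right this _
        _ = 2 * (v i * A i) := by rw [hAdef]; ring
    have hsum1 : garoSum f s Q ≤ 2 * ∑' i : s, v i * A i := by
      rw [← ENNReal.tsum_mul_left]
      exact Summable.tsum_le_tsum hterm ENNReal.summable ENNReal.summable
    have hhold : (∑' i : s, v i * A i) ≤
        (∑' i : s, v i * A i ^ p) ^ (1/p) * (∑' i : s, v i) ^ (1/q) := by
      have key : ∀ i : s, v i * A i = (v i ^ (1/p) * A i) * v i ^ (1/q) := by
        intro i
        have : v i ^ (1/p) * v i ^ (1/q) = v i := by
          rw [← ENNReal.rpow_add _ _ (hv0 i) (hvtop i)]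
          rw [one_div, one_div, hq.inv_add_inv_eq_one, ENNReal.rpow_one]
        calc v i * A i = (v i ^ (1/p) * v i ^ (1/q)) * A i := by rw [this]
          _ = (v i ^ (1/p) * A i) * v i ^ (1/q) := by ring
      calc (∑' i : s, v i * A i)
          = ∑' i : s, (v i ^ (1/p) * A i) * v i ^ (1/q) := by
            exact tsum_congr key
        _ ≤ (∑' i : s, (v i ^ (1/p) * A i) ^ p) ^ (1/p) *
              (∑' i : s, (v i ^ (1/q)) ^ q) ^ (1/q) := tsum_holder _ _ hq
        _ = (∑' i : s, v i * A i ^ p) ^ (1/p) * (∑' i : s, v i) ^ (1/q) := by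
            congr 1
            · congr 1
              refine tsum_congr fun i => ?_
              rw [ENNReal.mul_rpow_of_nonneg _ _ (by positivity),
                ← ENNReal.rpow_mul, one_div, inv_mul_cancel₀ hq.ne_zero,
                ENNReal.rpow_one]
            · congr 1
              refine tsum_congr fun i => ?_
              rw [← ENNReal.rpow_mul, one_div, inv_mul_cancel₀ hq.symm.ne_zero,
                ENNReal.rpow_one]
    have hJle : (∑' i : s, v i * A i ^ p) ^ (1/p) ≤ J := by
      rw [hJ, jnNorm]
      exact le_iSup_of_le s (le_iSup_of_le Q (le_iSup_of_le hPQ le_rfl))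
    calc garoSum f s Q ≤ 2 * ∑' i : s, v i * A i := hsum1
      _ ≤ 2 * ((∑' i : s, v i * A i ^ p) ^ (1/p) * (∑' i : s, v i) ^ (1/q)) :=
          mul_le_mul_right hhold 2
      _ ≤ 2 * (J * (∑' i : s, v i) ^ (1/q)) :=
          mul_le_mul_right (mul_le_mul_left hJle _) 2
      _ = (2 * J) * (∑' i : s, v i) ^ (1 - 1/p) := by rw [h1q]; ring
  have hle : garoNorm p Q₀ f ≤ 2 * J := sInf_le hmem
  refine ⟨lt_of_le_of_lt hle ?_, hle⟩
  exact ENNReal.mul_lt_top (by norm_num) hJN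

end
end

section
/- Let 1 < p < ∞ and let Q₀ ⊂ ℝⁿ be a fixed cube. If g ∈ L¹(Q₀) satisfies ∫_{Q₀} g dx = 0, then ∫_{Q₀} |g(x)| dx ≤ |Q₀|^{1/p′} ‖g‖_{GaRo_p(Q₀)}, where 1/p′ = 1 − 1/p. -/
open MeasureTheory ENNReal Set

noncomputable section

/-- For `1 < p < ∞`, a cube `Q₀ ⊆ ℝⁿ` and `g ∈ L¹(Q₀)` with `∫_{Q₀} g = 0`,
one has `∫_{Q₀} |g| ≤ |Q₀|^{1/p'} ‖g‖_{GaRo_p(Q₀)}` where `1/p' = 1 - 1/p`. -/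
theorem l1_le_garo_of_mean_zero {n : ℕ} (p : ℝ) (hp : 1 < p) (Q₀ : Cube n)
    (g : (Fin n → ℝ) → ℝ) (hg : IntegrableOn g Q₀.toSet)
    (hmean : ∫ x in Q₀.toSet, g x = 0) :
    ∫⁻ x in Q₀.toSet, (‖g x‖₊ : ℝ≥0∞) ≤
      ENNReal.ofReal (Q₀.vol ^ (1 - 1/p)) * garoNorm p Q₀ g := by
  have hvolpos : 0 < Q₀.vol := pow_pos Q₀.side_pos n
  set V : ℝ≥0∞ := ENNReal.ofReal Q₀.vol with hV
  have hV0 : V ≠ 0 := by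
    simp [hV, ENNReal.ofReal_eq_zero, not_le, hvolpos]
  have hVtop : V ≠ ⊤ := ENNReal.ofReal_ne_top
  have hμ : volume Q₀.toSet = V := Q₀.volume_toSet
  have hpt : ∀ x, V * (‖g x‖₊ : ℝ≥0∞) ≤
      ∫⁻ y in Q₀.toSet, (‖g x - g y‖₊ : ℝ≥0∞) := by
    intro x
    have hconst : IntegrableOn (fun _ => g x) Q₀.toSet := by
      refine integrableOn_const (hs := ?_)
      rw [hμ]; exact hVtop
    have hint : ∫ y in Q₀.toSet, (g x - g y) = Q₀.vol * g x := by
      rw [integral_sub hconst hg, hmean, sub_zero, integral_const, measureReal_restrict_apply_univ, measureReal_def, hμ, smul_eq_mul,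
        ENNReal.toReal_ofReal hvolpos.le]
    calc V * (‖g x‖₊ : ℝ≥0∞) = ENNReal.ofReal ‖∫ y in Q₀.toSet, (g x - g y)‖ := by
          rw [hint, norm_mul, Real.norm_of_nonneg hvolpos.le,
            ENNReal.ofReal_mul hvolpos.le, ofReal_norm, enorm_eq_nnnorm]
      _ ≤ ∫⁻ y in Q₀.toSet, (‖g x - g y‖₊ : ℝ≥0∞) := by
          rw [ofReal_norm]
          exact enorm_integral_le_lintegral_enorm _
  have hkey : V * ∫⁻ x in Q₀.toSet, (‖g x‖₊ : ℝ≥0∞) ≤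
      ∫⁻ x in Q₀.toSet, ∫⁻ y in Q₀.toSet, (‖g x - g y‖₊ : ℝ≥0∞) := by
    rw [← lintegral_const_mul' _ _ hVtop]
    exact lintegral_mono hpt
  have hpack : IsPackedFamily Q₀ ({0} : Set ℕ) (fun _ => Q₀) :=
    ⟨fun _ _ => subset_rfl, Set.pairwise_singleton _ _⟩
  set S := {C : ℝ≥0∞ | ∀ s Q, IsPackedFamily Q₀ s Q →
      garoSum g s Q ≤ C * (∑' i : s, ENNReal.ofReal (Q (i : ℕ)).vol) ^ (1 - 1/p)} with hS
  have hbound : ∀ C ∈ S, ∫⁻ x in Q₀.toSet, (‖g x‖₊ : ℝ≥0∞) ≤ C * V ^ (1 - 1/p) := by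
    intro C hC
    have h1 := hC _ _ hpack
    rw [garoSum, tsum_singleton (0 : ℕ)
      (fun _ => (ENNReal.ofReal Q₀.vol)⁻¹ *
        ∫⁻ x in Q₀.toSet, ∫⁻ y in Q₀.toSet, (‖g x - g y‖₊ : ℝ≥0∞)),
      tsum_singleton (0 : ℕ) (fun _ => ENNReal.ofReal Q₀.vol)] at h1
    refine le_trans ?_ h1
    rw [← hV, ← ENNReal.div_eq_inv_mul, ENNReal.le_div_iff_mul_le (Or.inl hV0) (Or.inl hVtop),
      mul_comm]
    exact hkey
  have hVp0 : V ^ (1 - 1/p) ≠ 0 :=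
    (ENNReal.rpow_pos (lt_of_le_of_ne (zero_le (a := V)) (Ne.symm hV0)) hVtop).ne'
  have hVptop : V ^ (1 - 1/p) ≠ ⊤ := ENNReal.rpow_ne_top_of_nonneg
    (by rw [sub_nonneg]; exact le_of_lt (by rw [div_lt_one (lt_trans one_pos hp)]; exact hp)) hVtop
  have hfin : ∫⁻ x in Q₀.toSet, (‖g x‖₊ : ℝ≥0∞) ≤ sInf S * V ^ (1 - 1/p) := by
    rw [← ENNReal.div_le_iff hVp0 hVptop]
    refine le_sInf fun C hC => ?_
    rw [ENNReal.div_le_iff hVp0 hVptop]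
    exact hbound C hC
  calc ∫⁻ x in Q₀.toSet, (‖g x‖₊ : ℝ≥0∞) ≤ sInf S * V ^ (1 - 1/p) := hfin
    _ = ENNReal.ofReal (Q₀.vol ^ (1 - 1/p)) * garoNorm p Q₀ g := by
        rw [hV, ENNReal.ofReal_rpow_of_pos hvolpos, mul_comm, garoNorm]

end
end

section
/- Let Q₀ ⊂ ℝⁿ be a fixed cube and suppose f ∈ S_n(Q₀) with constant c(f) and upper gradient g ∈ Lⁿ(Q₀). Then for every family {Q_i} ∈ P(Q₀), Σ_i (1/|Q_i|)∫_{Q_i}∫_{Q_i}|f(x)−f(y)| dx dy ≤ 2 c(f) c_n ( ∫_{Q₀} |g|ⁿ dx )^{1/n} Σ_i |Q_i|; consequently ‖f − f_{Q₀}‖_{GaRo_∞(Q₀)} ≤ 2 c(f) c_n ( ∫_{Q₀} |g|ⁿ dx )^{1/n} and f ∈ BMO(Q₀). -/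
open MeasureTheory ENNReal Set

noncomputable section

namespace SnBmoAux

open Cube

lemma volume_toSet {n : ℕ} (Q : Cube n) :
    volume Q.toSet = ENNReal.ofReal Q.vol := by
  rw [Cube.toSet, volume_pi_pi]
  simp only [Real.volume_Icc, add_sub_cancel_left, Finset.prod_const, Finset.card_univ,
    Fintype.card_fin]
  rw [← ENNReal.ofReal_pow Q.side_pos.le, Cube.vol]

lemma measurable_toSet {n : ℕ} (Q : Cube n) : MeasurableSet Q.toSet :=
  MeasurableSet.univ_pi fun _ => measurableSet_Icc

lemma vol_pos {n : ℕ} (Q : Cube n) : 0 < Q.vol := pow_pos Q.side_pos n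

lemma side_mul_inv_rpow {n : ℕ} (hn : 0 < n) (Q : Cube n) :
    ENNReal.ofReal Q.side * ((ENNReal.ofReal Q.vol)⁻¹) ^ (1/(n:ℝ)) = 1 := by
  set x := ENNReal.ofReal Q.side with hx
  have hx0 : x ≠ 0 := by
    simp [hx, ENNReal.ofReal_pos, Q.side_pos]
  have hxt : x ≠ ⊤ := ENNReal.ofReal_ne_top
  have hv : ENNReal.ofReal Q.vol = x ^ n := by
    rw [Cube.vol, ENNReal.ofReal_pow Q.side_pos.le]
  rw [hv, ENNReal.inv_rpow, ← ENNReal.rpow_natCast x n, ← ENNReal.rpow_mul,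
    mul_one_div_cancel (by exact_mod_cast hn.ne' : (n:ℝ) ≠ 0), ENNReal.rpow_one,
    ENNReal.mul_inv_cancel hx0 hxt]

/-- key pointwise bound: mean oscillation on a subcube is at most `cf * G`. -/
lemma osc_le {n : ℕ} (hn : 0 < n) (Q₀ : Cube n) (f g : (Fin n → ℝ) → ℝ) (cf : ℝ)
    (hcf : 0 < cf) (hug : UpperGradient Q₀ (n : ℝ) f g cf)
    (Q : Cube n) (hQ : Q.toSet ⊆ Q₀.toSet) :
    (ENNReal.ofReal Q.vol)⁻¹ * ∫⁻ x in Q.toSet, (‖f x - Q.avg f‖₊ : ℝ≥0∞) ≤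
      ENNReal.ofReal cf *
        (∫⁻ x in Q₀.toSet, (‖g x‖₊ : ℝ≥0∞) ^ (n : ℝ)) ^ (1/(n:ℝ)) := by
  refine (hug Q hQ).trans ?_
  have hmono : (∫⁻ x in Q.toSet, (‖g x‖₊ : ℝ≥0∞) ^ (n : ℝ)) ≤
      ∫⁻ x in Q₀.toSet, (‖g x‖₊ : ℝ≥0∞) ^ (n : ℝ) :=
    lintegral_mono' (Measure.restrict_mono hQ le_rfl) le_rfl
  have h1n : (0:ℝ) ≤ 1/(n:ℝ) := by positivity
  calc ENNReal.ofReal (cf * Q.side) *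
        ((ENNReal.ofReal Q.vol)⁻¹ * ∫⁻ x in Q.toSet, (‖g x‖₊ : ℝ≥0∞) ^ (n:ℝ)) ^ (1/(n:ℝ))
      = (ENNReal.ofReal cf * ((∫⁻ x in Q.toSet, (‖g x‖₊ : ℝ≥0∞) ^ (n:ℝ)) ^ (1/(n:ℝ)))) *
          (ENNReal.ofReal Q.side * ((ENNReal.ofReal Q.vol)⁻¹) ^ (1/(n:ℝ))) := by
        rw [ENNReal.ofReal_mul hcf.le, ENNReal.mul_rpow_of_nonneg _ _ h1n]
        ring
    _ = ENNReal.ofReal cf * ((∫⁻ x in Q.toSet, (‖g x‖₊ : ℝ≥0∞) ^ (n:ℝ)) ^ (1/(n:ℝ))) := by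
        rw [side_mul_inv_rpow hn Q, mul_one]
    _ ≤ ENNReal.ofReal cf *
        ((∫⁻ x in Q₀.toSet, (‖g x‖₊ : ℝ≥0∞) ^ (n:ℝ)) ^ (1/(n:ℝ))) := by
        gcongr

/-- double integral bound via the oscillation. -/
lemma double_le {n : ℕ} (Q : Cube n) (f : (Fin n → ℝ) → ℝ)
    (hf : AEStronglyMeasurable f (volume.restrict Q.toSet)) :
    (∫⁻ x in Q.toSet, ∫⁻ y in Q.toSet, (‖f x - f y‖₊ : ℝ≥0∞)) ≤
      2 * ENNReal.ofReal Q.vol * ∫⁻ x in Q.toSet, (‖f x - Q.avg f‖₊ : ℝ≥0∞) := by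
  set c := Q.avg f
  set I := ∫⁻ x in Q.toSet, (‖f x - c‖₊ : ℝ≥0∞) with hI
  have hmeas : AEMeasurable (fun x => (‖f x - c‖₊ : ℝ≥0∞)) (volume.restrict Q.toSet) :=
    (hf.sub aestronglyMeasurable_const).enorm
  have hμ : volume Q.toSet = ENNReal.ofReal Q.vol := volume_toSet Q
  have step1 : ∀ x, (∫⁻ y in Q.toSet, (‖f x - f y‖₊ : ℝ≥0∞)) ≤
      (‖f x - c‖₊ : ℝ≥0∞) * ENNReal.ofReal Q.vol + I := by
    intro x
    have : (∫⁻ y in Q.toSet, (‖f x - f y‖₊ : ℝ≥0∞)) ≤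
        ∫⁻ y in Q.toSet, ((‖f x - c‖₊ : ℝ≥0∞) + (‖f y - c‖₊ : ℝ≥0∞)) := by
      refine lintegral_mono fun y => ?_
      have : ‖f x - f y‖₊ ≤ ‖f x - c‖₊ + ‖f y - c‖₊ := by
        have := nnnorm_sub_le (f x - c) (f y - c)
        simpa [sub_sub_sub_cancel_right] using this
      rw [← ENNReal.coe_add]
      exact ENNReal.coe_le_coe.mpr this
    refine this.trans ?_
    rw [lintegral_add_left' aemeasurable_const, lintegral_const, Measure.restrict_apply_univ, hμ]
  calc (∫⁻ x in Q.toSet, ∫⁻ y in Q.toSet, (‖f x - f y‖₊ : ℝ≥0∞))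
      ≤ ∫⁻ x in Q.toSet, ((‖f x - c‖₊ : ℝ≥0∞) * ENNReal.ofReal Q.vol + I) :=
        lintegral_mono step1
    _ = I * ENNReal.ofReal Q.vol + I * ENNReal.ofReal Q.vol := by
        rw [lintegral_add_right' _ aemeasurable_const, lintegral_const,
          Measure.restrict_apply_univ, hμ, lintegral_mul_const'' _ hmeas]
    _ = 2 * ENNReal.ofReal Q.vol * I := by ring
end SnBmoAux

open SnBmoAux

/-- There is a constant `c_n` depending only on `n` such that if
`f ∈ S_n(Q₀)` with constant `c(f)` and upper gradient `g ∈ Lⁿ(Q₀)`, then for every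
family `{Q_i} ∈ P(Q₀)`,
`Σ_i (1/|Q_i|)∫∫ |f(x)-f(y)| ≤ 2 c(f) c_n (∫_{Q₀} |g|ⁿ)^{1/n} Σ_i |Q_i|`;
consequently `‖f - f_{Q₀}‖_{GaRo_∞(Q₀)} ≤ 2 c(f) c_n (∫_{Q₀} |g|ⁿ)^{1/n}` and `f ∈ BMO(Q₀)`. -/
theorem sn_implies_bmo (n : ℕ) (hn : 1 < n) :
    ∃ cn : ℝ, 0 < cn ∧
      ∀ (Q₀ : Cube n) (f g : (Fin n → ℝ) → ℝ) (cf : ℝ), 0 < cf →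
        IntegrableOn f Q₀.toSet →
        MemLp g (ENNReal.ofReal n) (volume.restrict Q₀.toSet) →
        UpperGradient Q₀ (n : ℝ) f g cf →
        (∀ s Q, IsPackedFamily Q₀ s Q →
            garoSum f s Q ≤
              ENNReal.ofReal (2 * cf * cn) *
                  (∫⁻ x in Q₀.toSet, (‖g x‖₊ : ℝ≥0∞) ^ (n : ℝ)) ^ (1/(n : ℝ)) *
                ∑' i : s, ENNReal.ofReal (Q (i : ℕ)).vol) ∧
          garoNormInf Q₀ (fun x => f x - Q₀.avg f) ≤
              ENNReal.ofReal (2 * cf * cn) *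
                (∫⁻ x in Q₀.toSet, (‖g x‖₊ : ℝ≥0∞) ^ (n : ℝ)) ^ (1/(n : ℝ)) ∧
            bmoSup Q₀ f < ⊤:= by
  refine ⟨1, one_pos, fun Q₀ f g cf hcf hf hg hug => ?_⟩
  have hn0 : 0 < n := hn.trans_le' zero_le_one |>.trans_le le_rfl
  set G := (∫⁻ x in Q₀.toSet, (‖g x‖₊ : ℝ≥0∞) ^ (n : ℝ)) ^ (1/(n:ℝ)) with hG
  have key : ∀ s Q, IsPackedFamily Q₀ s Q →
      garoSum f s Q ≤ ENNReal.ofReal (2 * cf * 1) * G * ∑' i : s, ENNReal.ofReal (Q (i:ℕ)).vol := by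
    intro s Q hsQ
    have hterm : ∀ i : s,
        (ENNReal.ofReal (Q (i:ℕ)).vol)⁻¹ *
          ∫⁻ x in (Q (i:ℕ)).toSet, ∫⁻ y in (Q (i:ℕ)).toSet, (‖f x - f y‖₊ : ℝ≥0∞) ≤
        (ENNReal.ofReal (2 * cf * 1) * G) * ENNReal.ofReal (Q (i:ℕ)).vol := by
      intro i
      set Qi := Q (i:ℕ)
      have hsub : Qi.toSet ⊆ Q₀.toSet := hsQ.1 (i:ℕ) i.2
      have hv0 : ENNReal.ofReal Qi.vol ≠ 0 := by
        simp [ENNReal.ofReal_pos, vol_pos Qi]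
      have hvt : ENNReal.ofReal Qi.vol ≠ ⊤ := ENNReal.ofReal_ne_top
      have hfm : AEStronglyMeasurable f (volume.restrict Qi.toSet) :=
        hf.aestronglyMeasurable.mono_measure (Measure.restrict_mono hsub le_rfl)
      have h1 := double_le Qi f hfm
      have h2 := osc_le hn0 Q₀ f g cf hcf hug Qi hsub
      calc (ENNReal.ofReal Qi.vol)⁻¹ *
            ∫⁻ x in Qi.toSet, ∫⁻ y in Qi.toSet, (‖f x - f y‖₊ : ℝ≥0∞)
          ≤ (ENNReal.ofReal Qi.vol)⁻¹ *
            (2 * ENNReal.ofReal Qi.vol * ∫⁻ x in Qi.toSet, (‖f x - Qi.avg f‖₊ : ℝ≥0∞)) := by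
            gcongr
        _ = 2 * ENNReal.ofReal Qi.vol *
            ((ENNReal.ofReal Qi.vol)⁻¹ * ∫⁻ x in Qi.toSet, (‖f x - Qi.avg f‖₊ : ℝ≥0∞)) := by
            ring
        _ ≤ 2 * ENNReal.ofReal Qi.vol * (ENNReal.ofReal cf * G) := by gcongr
        _ = (ENNReal.ofReal (2 * cf * 1) * G) * ENNReal.ofReal Qi.vol := by
            rw [mul_one, ENNReal.ofReal_mul (by norm_num : (0:ℝ) ≤ 2), ENNReal.ofReal_ofNat]
            ring
    calc garoSum f s Q ≤ ∑' i : s, (ENNReal.ofReal (2 * cf * 1) * G) * ENNReal.ofReal (Q (i:ℕ)).vol :=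
          ENNReal.tsum_le_tsum hterm
      _ = ENNReal.ofReal (2 * cf * 1) * G * ∑' i : s, ENNReal.ofReal (Q (i:ℕ)).vol :=
          ENNReal.tsum_mul_left
  refine ⟨key, ?_, ?_⟩
  · refine sInf_le ?_
    intro s Q hsQ
    have : garoSum (fun x => f x - Q₀.avg f) s Q = garoSum f s Q := by
      unfold garoSum
      simp only [sub_sub_sub_cancel_right]
    rw [this]
    exact key s Q hsQ
  · have hGlt : G < ⊤ := by
      have h2 := hg.2
      rw [eLpNorm_eq_lintegral_rpow_enorm_toReal (by positivity) (by simp)] at h2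
      rwa [ENNReal.toReal_ofReal (by positivity : (0:ℝ) ≤ (n:ℝ))] at h2
    have hb : bmoSup Q₀ f ≤ ENNReal.ofReal cf * G := by
      refine iSup₂_le fun Q hQ => osc_le hn0 Q₀ f g cf hcf hug Q hQ
    exact hb.trans_lt (ENNReal.mul_lt_top ENNReal.ofReal_lt_top hGlt)


end
end

section
/- Let Q₀ ⊂ ℝⁿ be a fixed cube and suppose f, g ∈ L¹(Q₀) satisfy f**(t) − f*(t) ≤ c_n t^{1/n} g**(t) for 0 < t < |Q₀|/2. Then sup_{t>0} ( f**(t) − f*(t) ) t^{1/n′} ≤ c_n ‖g‖_{L¹(Q₀)} + (|Q₀|/2)^{1/n′ − 1} ‖f‖_{L¹(Q₀)}, where 1/n′ = 1 − 1/n. -/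
open MeasureTheory ENNReal Set

noncomputable section

/-- The decreasing rearrangement is antitone. -/
lemma rearr_antitone {α : Type*} [MeasurableSpace α] (μ : Measure α) (f : α → ℝ) :
    Antitone (rearr μ f) := by
  intro s₁ s₂ h
  exact sInf_le_sInf fun l hl => le_trans hl (ENNReal.ofReal_le_ofReal h)

/-- Markov-type bound used to handle infinite rearrangement values. -/
lemma aux_markov {α : Type*} [MeasurableSpace α] (μ : Measure α) (f : α → ℝ)
    (hf : AEMeasurable (fun x => (‖f x‖₊ : ℝ≥0∞)) μ) (l : ℝ≥0∞) :
    l * μ {x | l < (‖f x‖₊ : ℝ≥0∞)} ≤ ∫⁻ x, (‖f x‖₊ : ℝ≥0∞) ∂μ := by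
  have hsub : {x | l < (‖f x‖₊ : ℝ≥0∞)} ⊆ {x | l ≤ (‖f x‖₊ : ℝ≥0∞)} := by
    intro x hx
    simp only [Set.mem_setOf_eq] at hx ⊢
    exact le_of_lt hx
  calc l * μ {x | l < (‖f x‖₊ : ℝ≥0∞)} ≤ l * μ {x | l ≤ (‖f x‖₊ : ℝ≥0∞)} :=
        mul_le_mul_right (measure_mono hsub) l
    _ ≤ ∫⁻ x, (‖f x‖₊ : ℝ≥0∞) ∂μ := mul_meas_ge_le_lintegral₀ hf l

/-- If `l < f*(s)` then the distribution function at `l` exceeds `s`. -/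
lemma lt_meas_of_lt_rearr {α : Type*} [MeasurableSpace α] {μ : Measure α} {f : α → ℝ}
    {l : ℝ≥0∞} {s : ℝ} (h : l < rearr μ f s) :
    ENNReal.ofReal s < μ {x | l < (‖f x‖₊ : ℝ≥0∞)} := by
  by_contra hc
  push_neg at hc
  have hmem : l ∈ {l' : ℝ≥0∞ | μ {x | l' < (‖f x‖₊ : ℝ≥0∞)} ≤ ENNReal.ofReal s} := hc
  exact absurd (sInf_le hmem : rearr μ f s ≤ l) (not_le.mpr h)

/-- Key lemma: `∫₀ᵗ f*(s) ds ≤ ‖f‖_{L¹}`. -/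
lemma lintegral_rearr_le {α : Type*} [MeasurableSpace α] (μ : Measure α) (f : α → ℝ)
    (hf : AEMeasurable (fun x => (‖f x‖₊ : ℝ≥0∞)) μ) (t : ℝ) :
    ∫⁻ s in Set.Ioc (0 : ℝ) t, rearr μ f s ≤ ∫⁻ x, (‖f x‖₊ : ℝ≥0∞) ∂μ := by
  set F := ∫⁻ x, (‖f x‖₊ : ℝ≥0∞) ∂μ with hF
  by_cases hinf : ∃ s : ℝ, 0 < s ∧ rearr μ f s = ∞
  · -- then F = ∞
    obtain ⟨s, hs, hse⟩ := hinf
    have hkey : ∀ l : ℝ≥0∞, l ≠ ∞ → ENNReal.ofReal s < μ {x | l < (‖f x‖₊ : ℝ≥0∞)} := by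
      intro l hl
      exact lt_meas_of_lt_rearr (by rw [hse]; exact hl.lt_top)
    have hs0 : ENNReal.ofReal s ≠ 0 := by
      simp [ENNReal.ofReal_eq_zero, not_le, hs]
    have hFtop : F = ∞ := by
      by_contra hFne
      have hdivne : F / ENNReal.ofReal s ≠ ∞ := (ENNReal.div_lt_top hFne hs0).ne
      obtain ⟨m, hm⟩ := ENNReal.exists_nat_gt hdivne
      have hFlt : F < (m : ℝ≥0∞) * ENNReal.ofReal s :=
        (ENNReal.div_lt_iff (Or.inl hs0) (Or.inl ENNReal.ofReal_ne_top)).mp hm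
      have : (m : ℝ≥0∞) * ENNReal.ofReal s ≤ F := by
        calc (m : ℝ≥0∞) * ENNReal.ofReal s
            ≤ (m : ℝ≥0∞) * μ {x | (m : ℝ≥0∞) < (‖f x‖₊ : ℝ≥0∞)} :=
              mul_le_mul_right (hkey _ (ENNReal.natCast_ne_top m)).le _
          _ ≤ F := aux_markov μ f hf _
      exact absurd hFlt (not_lt.mpr this)
    simp [hFtop]
  · push_neg at hinf
    have hfin : ∀ s : ℝ, 0 < s → rearr μ f s ≠ ∞ := hinf
    have hmeas : Measurable (rearr μ f) := (rearr_antitone μ f).measurable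
    have hmeas2 : AEMeasurable (fun s => (rearr μ f s).toReal)
        (volume.restrict (Set.Ioc (0 : ℝ) t)) :=
      (ENNReal.measurable_toReal.comp hmeas).aemeasurable
    have step1 : ∫⁻ s in Set.Ioc (0 : ℝ) t, rearr μ f s
        = ∫⁻ s in Set.Ioc (0 : ℝ) t, ENNReal.ofReal ((rearr μ f s).toReal) := by
      refine setLIntegral_congr_fun measurableSet_Ioc ?_
      intro s hs
      exact (ENNReal.ofReal_toReal (hfin s hs.1)).symm
    rw [step1]
    have step2 : ∫⁻ s in Set.Ioc (0 : ℝ) t, ENNReal.ofReal ((rearr μ f s).toReal)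
        = ∫⁻ l in Set.Ioi (0 : ℝ),
            (volume.restrict (Set.Ioc (0 : ℝ) t)) {s | l < (rearr μ f s).toReal} :=
      lintegral_eq_lintegral_meas_lt _ (Filter.Eventually.of_forall fun s => ENNReal.toReal_nonneg)
        hmeas2
    rw [step2]
    have step3 : ∀ l ∈ Set.Ioi (0 : ℝ),
        (volume.restrict (Set.Ioc (0 : ℝ) t)) {s | l < (rearr μ f s).toReal}
          ≤ μ {x | ENNReal.ofReal l < (‖f x‖₊ : ℝ≥0∞)} := by
      intro l hl
      set D := μ {x | ENNReal.ofReal l < (‖f x‖₊ : ℝ≥0∞)} with hD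
      rcases eq_or_ne D ∞ with hDtop | hDne
      · rw [hDtop]; exact le_top
      rw [Measure.restrict_apply' measurableSet_Ioc]
      have hsub : {s | l < (rearr μ f s).toReal} ∩ Set.Ioc (0 : ℝ) t
          ⊆ Set.Ioc (0 : ℝ) D.toReal := by
        rintro s ⟨hs1, hs2, hs3⟩
        have hfin' := hfin s hs2
        have hlt : ENNReal.ofReal l < rearr μ f s :=
          (ENNReal.ofReal_lt_iff_lt_toReal (le_of_lt hl) hfin').mpr hs1
        have : ENNReal.ofReal s < D := lt_meas_of_lt_rearr hlt
        exact ⟨hs2, ((ENNReal.ofReal_lt_iff_lt_toReal hs2.le hDne).mp this).le⟩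
      calc volume ({s | l < (rearr μ f s).toReal} ∩ Set.Ioc (0 : ℝ) t)
          ≤ volume (Set.Ioc (0 : ℝ) D.toReal) := measure_mono hsub
        _ = ENNReal.ofReal D.toReal := by rw [Real.volume_Ioc, sub_zero]
        _ ≤ D := ENNReal.ofReal_toReal_le
    calc ∫⁻ l in Set.Ioi (0 : ℝ),
          (volume.restrict (Set.Ioc (0 : ℝ) t)) {s | l < (rearr μ f s).toReal}
        ≤ ∫⁻ l in Set.Ioi (0 : ℝ), μ {x | ENNReal.ofReal l < (‖f x‖₊ : ℝ≥0∞)} := by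
          refine lintegral_mono_ae ?_
          filter_upwards [ae_restrict_mem measurableSet_Ioi] with l hl using step3 l hl
      _ = ∫⁻ l in Set.Ioi (0 : ℝ), μ {x | l < ‖f x‖} := by
          refine setLIntegral_congr_fun measurableSet_Ioi ?_
          intro l hl
          beta_reduce
          congr 1
          ext x
          simp only [Set.mem_setOf_eq, ← enorm_eq_nnnorm, ← ofReal_norm]
          exact ENNReal.ofReal_lt_ofReal_iff_of_nonneg (le_of_lt hl)
      _ = ∫⁻ x, ENNReal.ofReal ‖f x‖ ∂μ := by
          refine (lintegral_eq_lintegral_meas_lt μ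
            (Filter.Eventually.of_forall fun x => norm_nonneg _) ?_).symm
          have : (fun x => ‖f x‖) = fun x => ((‖f x‖₊ : ℝ≥0∞)).toReal := by
            ext x; simp
          rw [this]
          exact ENNReal.measurable_toReal.comp_aemeasurable hf
      _ = F := by
          simp_rw [ofReal_norm, enorm_eq_nnnorm]
          rfl

/-- If `f, g ∈ L¹(Q₀)` satisfy `f**(t) - f*(t) ≤ c_n t^{1/n} g**(t)` for
`0 < t < |Q₀|/2`, then
`sup_{t>0} (f**(t) - f*(t)) t^{1/n'} ≤ c_n ‖g‖_{L¹(Q₀)} + (|Q₀|/2)^{1/n' - 1} ‖f‖_{L¹(Q₀)}`,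
where `1/n' = 1 - 1/n`. -/
theorem weak_gagliardo_from_rearr {n : ℕ} (hn : 0 < n) (Q₀ : Cube n)
    (f g : (Fin n → ℝ) → ℝ) (cn : ℝ) (hcn : 0 ≤ cn)
    (hf : IntegrableOn f Q₀.toSet) (hg : IntegrableOn g Q₀.toSet)
    (h : ∀ t : ℝ, 0 < t → t < Q₀.vol / 2 →
      rearr2 (volume.restrict Q₀.toSet) f t - rearr (volume.restrict Q₀.toSet) f t ≤
        ENNReal.ofReal (cn * t ^ ((n : ℝ)⁻¹)) * rearr2 (volume.restrict Q₀.toSet) g t) :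
    (⨆ t ∈ Set.Ioi (0 : ℝ),
        (rearr2 (volume.restrict Q₀.toSet) f t - rearr (volume.restrict Q₀.toSet) f t) *
          ENNReal.ofReal (t ^ (1 - (n : ℝ)⁻¹))) ≤
      ENNReal.ofReal cn * (∫⁻ x in Q₀.toSet, (‖g x‖₊ : ℝ≥0∞)) +
        ENNReal.ofReal ((Q₀.vol / 2) ^ ((1 - (n : ℝ)⁻¹) - 1)) *
          ∫⁻ x in Q₀.toSet, (‖f x‖₊ : ℝ≥0∞) := by
  set μ := volume.restrict Q₀.toSet with hμ
  set F := ∫⁻ x in Q₀.toSet, (‖f x‖₊ : ℝ≥0∞) with hFdef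
  set G := ∫⁻ x in Q₀.toSet, (‖g x‖₊ : ℝ≥0∞) with hGdef
  have hfm : AEMeasurable (fun x => (‖f x‖₊ : ℝ≥0∞)) μ := hf.aestronglyMeasurable.enorm
  have hgm : AEMeasurable (fun x => (‖g x‖₊ : ℝ≥0∞)) μ := hg.aestronglyMeasurable.enorm
  have hinv_pos : (0:ℝ) < (n:ℝ)⁻¹ := by
    have : (0:ℝ) < (n:ℝ) := by exact_mod_cast hn
    positivity
  have hvolpos : (0:ℝ) < Q₀.vol := pow_pos Q₀.side_pos n
  have hvol : (0:ℝ) < Q₀.vol / 2 := by linarith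
  refine iSup₂_le fun t ht => ?_
  have ht0 : (0:ℝ) < t := ht
  rcases lt_or_ge t (Q₀.vol / 2) with hlt | hge
  · have key : ENNReal.ofReal (t ^ ((n:ℝ)⁻¹)) * ENNReal.ofReal (t ^ (1 - (n:ℝ)⁻¹))
        = ENNReal.ofReal t := by
      rw [← ENNReal.ofReal_mul (Real.rpow_nonneg ht0.le _), ← Real.rpow_add ht0]
      norm_num
    have hsum : ENNReal.ofReal t * rearr2 μ g t ≤ ∫⁻ s in Set.Ioc (0:ℝ) t, rearr μ g s := by
      rw [rearr2, ← mul_assoc]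
      calc ENNReal.ofReal t * (ENNReal.ofReal t)⁻¹ * ∫⁻ s in Set.Ioc (0:ℝ) t, rearr μ g s
          ≤ 1 * ∫⁻ s in Set.Ioc (0:ℝ) t, rearr μ g s :=
            mul_le_mul_left (ENNReal.mul_inv_le_one _) _
        _ = ∫⁻ s in Set.Ioc (0:ℝ) t, rearr μ g s := one_mul _
    calc (rearr2 μ f t - rearr μ f t) * ENNReal.ofReal (t ^ (1 - (n:ℝ)⁻¹))
        ≤ (ENNReal.ofReal (cn * t ^ ((n:ℝ)⁻¹)) * rearr2 μ g t) *
            ENNReal.ofReal (t ^ (1 - (n:ℝ)⁻¹)) := mul_le_mul_left (h t ht0 hlt) _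
      _ = ENNReal.ofReal cn *
            ((ENNReal.ofReal (t ^ ((n:ℝ)⁻¹)) * ENNReal.ofReal (t ^ (1 - (n:ℝ)⁻¹))) *
              rearr2 μ g t) := by
          rw [ENNReal.ofReal_mul hcn]; ring
      _ = ENNReal.ofReal cn * (ENNReal.ofReal t * rearr2 μ g t) := by rw [key]
      _ ≤ ENNReal.ofReal cn * G := by
          refine mul_le_mul_right (hsum.trans ?_) _
          exact lintegral_rearr_le μ g hgm t
      _ ≤ ENNReal.ofReal cn * G +
            ENNReal.ofReal ((Q₀.vol / 2) ^ ((1 - (n : ℝ)⁻¹) - 1)) * F := le_self_add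
  · have h1 : rearr2 μ f t - rearr μ f t ≤ rearr2 μ f t := tsub_le_self
    have h2 : rearr2 μ f t ≤ (ENNReal.ofReal t)⁻¹ * F :=
      mul_le_mul_right (lintegral_rearr_le μ f hfm t) _
    calc (rearr2 μ f t - rearr μ f t) * ENNReal.ofReal (t ^ (1 - (n:ℝ)⁻¹))
        ≤ ((ENNReal.ofReal t)⁻¹ * F) * ENNReal.ofReal (t ^ (1 - (n:ℝ)⁻¹)) :=
          mul_le_mul_left (h1.trans h2) _
      _ = (ENNReal.ofReal (t ^ (1 - (n:ℝ)⁻¹)) * (ENNReal.ofReal t)⁻¹) * F := by ring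
      _ = ENNReal.ofReal (t ^ ((1 - (n:ℝ)⁻¹) - 1)) * F := by
          rw [← ENNReal.ofReal_inv_of_pos ht0,
            ← ENNReal.ofReal_mul (Real.rpow_nonneg ht0.le _)]
          congr 1
          rw [← Real.rpow_neg_one t, ← Real.rpow_add ht0]
          ring_nf
      _ ≤ ENNReal.ofReal ((Q₀.vol / 2) ^ ((1 - (n:ℝ)⁻¹) - 1)) * F := by
          refine mul_le_mul_left (ENNReal.ofReal_le_ofReal ?_) F
          exact Real.rpow_le_rpow_of_nonpos hvol hge (by linarith)
      _ ≤ ENNReal.ofReal cn * G +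
            ENNReal.ofReal ((Q₀.vol / 2) ^ ((1 - (n : ℝ)⁻¹) - 1)) * F := le_add_self

end
end

section
/- Let Q₀ ⊂ ℝⁿ be a fixed cube and suppose f ∈ L¹(Q₀) satisfies the (1,1) Poincaré inequality with constant c(f) and g ∈ L¹(Q₀): for all subcubes Q ⊂ Q₀, (1/|Q|)∫_Q |f − f_Q| dx ≤ c(f) |Q|^{1/n} (1/|Q|) ∫_Q |g| dx. Then there is a constant c(n) (depending on n and c(f)) such that ‖f − f_{Q₀}‖*_{L(n′,∞)} ≤ c(n) ‖g‖_{L¹(Q₀)}, where 1/n′ = 1 − 1/n (a weak type form of the Gagliardo–Nirenberg inequality). -/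
open MeasureTheory ENNReal Set

noncomputable section

namespace GNaux
variable {n : ℕ}

lemma vol_pos (Q : Cube n) : 0 < Q.vol := pow_pos Q.side_pos n

lemma measurableSet_toSet (Q : Cube n) : MeasurableSet Q.toSet :=
  MeasurableSet.univ_pi fun _ => measurableSet_Icc

lemma volume_toSet (Q : Cube n) : volume Q.toSet = ENNReal.ofReal Q.vol := by
  rw [Cube.toSet, volume_pi_pi]
  simp only [Real.volume_Icc, add_sub_cancel_left]
  rw [Finset.prod_const, ← ENNReal.ofReal_pow Q.side_pos.le]
  simp [Cube.vol]

lemma interior_toSet (Q : Cube n) :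
    interior Q.toSet = Set.univ.pi fun i => Set.Ioo (Q.corner i) (Q.corner i + Q.side) := by
  rw [Cube.toSet, interior_pi_set finite_univ]
  simp [interior_Icc]

lemma volume_interior_toSet (Q : Cube n) :
    volume (interior Q.toSet) = ENNReal.ofReal Q.vol := by
  rw [interior_toSet, volume_pi_pi]
  simp only [Real.volume_Ioo, add_sub_cancel_left]
  rw [Finset.prod_const, ← ENNReal.ofReal_pow Q.side_pos.le]
  simp [Cube.vol]

lemma toSet_ae_eq_interior (Q : Cube n) : Q.toSet =ᵐ[volume] interior Q.toSet := by
  refine (MeasureTheory.ae_eq_set.2 ⟨?_, ?_⟩)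
  · have := measure_diff (interior_subset : interior Q.toSet ⊆ Q.toSet)
      (isOpen_interior.measurableSet).nullMeasurableSet
      (by rw [volume_interior_toSet]; exact ofReal_ne_top)
    rw [this, volume_toSet, volume_interior_toSet, tsub_self]
  · simpa using measure_mono_null (diff_subset_diff_left interior_subset)
      (by simp : volume (Q.toSet \ Q.toSet) = 0)

lemma lintegral_toSet_eq_interior (Q : Cube n) (h : (Fin n → ℝ) → ℝ≥0∞) :
    ∫⁻ x in Q.toSet, h x = ∫⁻ x in interior Q.toSet, h x := by
  rw [Measure.restrict_congr_set (toSet_ae_eq_interior Q)]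

/-- subset criterion -/
lemma toSet_subset (Q R : Cube n)
    (h : ∀ i, R.corner i ≤ Q.corner i ∧ Q.corner i + Q.side ≤ R.corner i + R.side) :
    Q.toSet ⊆ R.toSet := by
  intro x hx i _
  have hxi := hx i trivial
  exact ⟨(h i).1.trans hxi.1, hxi.2.trans (h i).2⟩

/-- disjointness of interiors from one coordinate -/
lemma disjoint_interior_of_coord (Q R : Cube n) (i : Fin n)
    (h : Q.corner i + Q.side ≤ R.corner i) :
    Disjoint (interior Q.toSet) (interior R.toSet) := by
  rw [interior_toSet, interior_toSet]
  refine Set.disjoint_left.2 fun x hxQ hxR => ?_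
  have h1 := (hxQ i trivial).2
  have h2 := (hxR i trivial).1
  linarith

lemma vol_rpow (hn : 0 < n) (Q : Cube n) : Q.vol ^ ((n:ℝ)⁻¹) = Q.side := by
  rw [Cube.vol, ← Real.rpow_natCast Q.side n, ← Real.rpow_mul Q.side_pos.le,
    mul_inv_cancel₀ (by exact_mod_cast hn.ne' : (n:ℝ) ≠ 0), Real.rpow_one]

lemma osc_le (hn : 0 < n) (cf : ℝ) (Q₀ : Cube n) (f g : (Fin n → ℝ) → ℝ)
    (hp : ∀ Q : Cube n, Q.toSet ⊆ Q₀.toSet →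
      (ENNReal.ofReal Q.vol)⁻¹ * ∫⁻ x in Q.toSet, (‖f x - Q.avg f‖₊ : ℝ≥0∞) ≤
        ENNReal.ofReal (cf * Q.vol ^ ((n : ℝ)⁻¹)) *
          ((ENNReal.ofReal Q.vol)⁻¹ * ∫⁻ x in Q.toSet, (‖g x‖₊ : ℝ≥0∞)))
    (Q : Cube n) (hQ : Q.toSet ⊆ Q₀.toSet) :
    ∫⁻ x in Q.toSet, (‖f x - Q.avg f‖₊ : ℝ≥0∞) ≤
      ENNReal.ofReal (cf * Q.side) * ∫⁻ x in Q.toSet, (‖g x‖₊ : ℝ≥0∞) := by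
  have h := hp Q hQ
  set V : ℝ≥0∞ := ENNReal.ofReal Q.vol with hV
  have hV0 : V ≠ 0 := by
    rw [hV]
    exact (ENNReal.ofReal_pos.2 (vol_pos Q)).ne'
  have hVt : V ≠ ⊤ := ofReal_ne_top
  have hVI : V * (V⁻¹ * ∫⁻ x in Q.toSet, (‖f x - Q.avg f‖₊ : ℝ≥0∞)) =
      ∫⁻ x in Q.toSet, (‖f x - Q.avg f‖₊ : ℝ≥0∞) := by
    rw [← mul_assoc, ENNReal.mul_inv_cancel hV0 hVt, one_mul]
  calc ∫⁻ x in Q.toSet, (‖f x - Q.avg f‖₊ : ℝ≥0∞)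
      = V * (V⁻¹ * ∫⁻ x in Q.toSet, (‖f x - Q.avg f‖₊ : ℝ≥0∞)) := hVI.symm
    _ ≤ V * (ENNReal.ofReal (cf * Q.vol ^ ((n : ℝ)⁻¹)) *
          (V⁻¹ * ∫⁻ x in Q.toSet, (‖g x‖₊ : ℝ≥0∞))) := by exact mul_le_mul_right h V
    _ = ENNReal.ofReal (cf * Q.vol ^ ((n : ℝ)⁻¹)) *
          (V * (V⁻¹ * ∫⁻ x in Q.toSet, (‖g x‖₊ : ℝ≥0∞))) := by ring
    _ = ENNReal.ofReal (cf * Q.side) * ∫⁻ x in Q.toSet, (‖g x‖₊ : ℝ≥0∞) := by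
        rw [← mul_assoc V, ENNReal.mul_inv_cancel hV0 hVt, one_mul, vol_rpow hn]

lemma avg_sub_const (f : (Fin n → ℝ) → ℝ) (Q : Cube n) (hfQ : IntegrableOn f Q.toSet) (c : ℝ) :
    Q.avg f - c = (∫ x in Q.toSet, (f x - c)) / Q.vol := by
  rw [integral_sub hfQ (integrableOn_const (by rw [volume_toSet]; exact ofReal_ne_top))]
  rw [setIntegral_const, Cube.avg, measureReal_def, volume_toSet, smul_eq_mul,
    ENNReal.toReal_ofReal (vol_pos Q).le]
  field_simp [(vol_pos Q).ne']

lemma abs_avg_sub_le (f : (Fin n → ℝ) → ℝ) (S R : Cube n) (hSR : S.toSet ⊆ R.toSet)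
    (hfR : IntegrableOn f R.toSet) :
    |S.avg f - R.avg f| ≤
      (∫⁻ x in R.toSet, (‖f x - R.avg f‖₊ : ℝ≥0∞)).toReal / S.vol := by
  have hfS : IntegrableOn f S.toSet := hfR.mono_set hSR
  have hint : IntegrableOn (fun x => f x - R.avg f) R.toSet :=
    hfR.sub (integrableOn_const (by rw [volume_toSet]; exact ofReal_ne_top))
  rw [avg_sub_const f S hfS]
  rw [abs_div, abs_of_pos (vol_pos S)]
  have h1 : |∫ x in S.toSet, (f x - R.avg f)| ≤ ∫ x in S.toSet, |f x - R.avg f| := by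
    simpa [Real.norm_eq_abs] using
      norm_integral_le_integral_norm (μ := volume.restrict S.toSet) (fun x => f x - R.avg f)
  have h2 : ∫ x in S.toSet, |f x - R.avg f| ≤ ∫ x in R.toSet, |f x - R.avg f| := by
    refine setIntegral_mono_set hint.abs ?_ (HasSubset.Subset.eventuallyLE hSR)
    exact Filter.Eventually.of_forall fun x => abs_nonneg _
  have h3 : ∫ x in R.toSet, |f x - R.avg f| =
      (∫⁻ x in R.toSet, (‖f x - R.avg f‖₊ : ℝ≥0∞)).toReal := by
    simp only [← enorm_eq_nnnorm]
    rw [← integral_norm_eq_lintegral_enorm hint.1]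
    simp [Real.norm_eq_abs]
  gcongr
  · exact (vol_pos S).le
  · exact (h1.trans h2).trans h3.le

section grid
variable (Q₀ : Cube n) (N : ℕ) (hN : 0 < N)

/-- the grid cell at multi-index `v`. -/
def cell (v : Fin n → Fin N) : Cube n :=
  ⟨fun i => Q₀.corner i + (v i : ℝ) * (Q₀.side / N), Q₀.side / N,
    div_pos Q₀.side_pos (by exact_mod_cast hN)⟩

lemma cell_side (v : Fin n → Fin N) : (cell Q₀ N hN v).side = Q₀.side / N := rfl

lemma side_eq_N_mul (hN : 0 < N) : Q₀.side = N * (Q₀.side / N) := by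
  have hN' : (N:ℝ) ≠ 0 := by exact_mod_cast hN.ne'
  field_simp

lemma cell_subset (v : Fin n → Fin N) : (cell Q₀ N hN v).toSet ⊆ Q₀.toSet := by
  refine toSet_subset _ _ fun i => ⟨?_, ?_⟩
  · have : (0:ℝ) ≤ (v i : ℝ) * (Q₀.side / N) :=
      mul_nonneg (Nat.cast_nonneg _) (div_pos Q₀.side_pos (by exact_mod_cast hN)).le
    simpa [cell] using this
  · show Q₀.corner i + (v i : ℝ) * (Q₀.side / N) + Q₀.side / N ≤ Q₀.corner i + Q₀.side
    have hv : ((v i : ℕ) : ℝ) + 1 ≤ N := by exact_mod_cast (v i).isLt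
    have hl : (0:ℝ) < Q₀.side / N := div_pos Q₀.side_pos (by exact_mod_cast hN)
    have : ((v i : ℕ) : ℝ) * (Q₀.side / N) + Q₀.side / N ≤ N * (Q₀.side / N) := by nlinarith
    rw [← side_eq_N_mul Q₀ N hN] at this
    linarith

lemma cell_cover : Q₀.toSet ⊆ ⋃ v : Fin n → Fin N, (cell Q₀ N hN v).toSet := by
  intro x hx
  have hl : (0:ℝ) < Q₀.side / N := div_pos Q₀.side_pos (by exact_mod_cast hN)
  set l := Q₀.side / N with hldef
  refine Set.mem_iUnion.2 ?_
  refine ⟨fun i => ⟨min ⌊(x i - Q₀.corner i) / l⌋₊ (N - 1), ?_⟩, fun i _ => ⟨?_, ?_⟩⟩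
  · exact lt_of_le_of_lt (min_le_right _ _) (Nat.sub_lt hN one_pos)
  · -- lower bound
    show Q₀.corner i + ((min ⌊(x i - Q₀.corner i) / l⌋₊ (N - 1) : ℕ) : ℝ) * l ≤ x i
    have hx1 := (hx i trivial).1
    have h1 : ((min ⌊(x i - Q₀.corner i) / l⌋₊ (N - 1) : ℕ) : ℝ) ≤ ⌊(x i - Q₀.corner i) / l⌋₊ := by
      exact_mod_cast min_le_left _ _
    have h2 : (⌊(x i - Q₀.corner i) / l⌋₊ : ℝ) ≤ (x i - Q₀.corner i) / l :=
      Nat.floor_le (div_nonneg (by linarith) hl.le)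
    have := mul_le_mul_of_nonneg_right (h1.trans h2) hl.le
    rw [div_mul_cancel₀ _ hl.ne'] at this
    linarith
  · -- upper bound
    show x i ≤ Q₀.corner i + ((min ⌊(x i - Q₀.corner i) / l⌋₊ (N - 1) : ℕ) : ℝ) * l + l
    have hx2 := (hx i trivial).2
    rcases le_or_gt ⌊(x i - Q₀.corner i) / l⌋₊ (N - 1) with hc | hc
    · rw [min_eq_left hc]
      have h2 : (x i - Q₀.corner i) / l < ⌊(x i - Q₀.corner i) / l⌋₊ + 1 :=
        Nat.lt_floor_add_one _
      have := mul_lt_mul_of_pos_right h2 hl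
      rw [div_mul_cancel₀ _ hl.ne'] at this
      nlinarith
    · rw [min_eq_right hc.le]
      have hN1 : ((N - 1 : ℕ) : ℝ) = (N : ℝ) - 1 := by
        have : (1:ℕ) ≤ N := hN
        push_cast [Nat.cast_sub this]
        ring
      have hs : Q₀.side = N * l := side_eq_N_mul Q₀ N hN
      rw [hN1]
      nlinarith

lemma cell_disjoint {v w : Fin n → Fin N} (hvw : v ≠ w) :
    Disjoint (interior (cell Q₀ N hN v).toSet) (interior (cell Q₀ N hN w).toSet) := by
  have hl : (0:ℝ) < Q₀.side / N := div_pos Q₀.side_pos (by exact_mod_cast hN)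
  obtain ⟨i, hi⟩ := Function.ne_iff.1 hvw
  rcases lt_or_gt_of_ne (fun h : (v i : ℕ) = (w i : ℕ) => hi (Fin.ext h)) with h | h
  · refine disjoint_interior_of_coord _ _ i ?_
    show Q₀.corner i + (v i : ℝ) * (Q₀.side / N) + Q₀.side / N ≤
      Q₀.corner i + (w i : ℝ) * (Q₀.side / N)
    have : ((v i : ℕ) : ℝ) + 1 ≤ ((w i : ℕ) : ℝ) := by exact_mod_cast h
    nlinarith
  · refine (disjoint_interior_of_coord _ _ i ?_).symm
    show Q₀.corner i + (w i : ℝ) * (Q₀.side / N) + Q₀.side / N ≤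
      Q₀.corner i + (v i : ℝ) * (Q₀.side / N)
    have : ((w i : ℕ) : ℝ) + 1 ≤ ((v i : ℕ) : ℝ) := by exact_mod_cast h
    nlinarith

/-- the 2l-sided block used for a chain step in direction `i` at position `k`. -/
def block (u : Fin n → Fin N) (i : Fin n) (k : ℕ) : Cube n :=
  ⟨fun j => Q₀.corner j +
      (if j = i then (k:ℝ) else ((min (u j : ℕ) (N-2) : ℕ) : ℝ)) * (Q₀.side / N),
    2 * (Q₀.side / N),
    by have : (0:ℝ) < Q₀.side / N := div_pos Q₀.side_pos (by exact_mod_cast hN); linarith⟩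

lemma block_side (u : Fin n → Fin N) (i : Fin n) (k : ℕ) :
    (block Q₀ N hN u i k).side = 2 * (Q₀.side / N) := rfl

lemma block_subset (u : Fin n → Fin N) (i : Fin n) (k : ℕ)
    (hk : k + 2 ≤ N) : (block Q₀ N hN u i k).toSet ⊆ Q₀.toSet := by
  have hl : (0:ℝ) < Q₀.side / N := div_pos Q₀.side_pos (by exact_mod_cast hN)
  refine toSet_subset _ _ fun j => ⟨?_, ?_⟩
  · have : (0:ℝ) ≤ (if j = i then (k:ℝ) else ((min (u j : ℕ) (N-2) : ℕ) : ℝ)) := by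
      split <;> positivity
    show Q₀.corner j ≤ Q₀.corner j + _ * (Q₀.side / N)
    nlinarith
  · show Q₀.corner j + _ * (Q₀.side / N) + 2 * (Q₀.side / N) ≤ Q₀.corner j + Q₀.side
    have hs : Q₀.side = N * (Q₀.side / N) := side_eq_N_mul Q₀ N (by omega)
    have hb : (if j = i then (k:ℝ) else ((min (u j : ℕ) (N-2) : ℕ) : ℝ)) + 2 ≤ N := by
      split
      · exact_mod_cast hk
      · have : min (u j : ℕ) (N-2) + 2 ≤ N := by omega
        exact_mod_cast this
    nlinarith

lemma cell_subset_block (u : Fin n → Fin N) (i : Fin n) (k : ℕ)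
    (hk : k + 2 ≤ N) (u' : Fin n → Fin N) (hoff : ∀ j, j ≠ i → (u' j : ℕ) = (u j : ℕ))
    (hi : (u' i : ℕ) = k ∨ (u' i : ℕ) = k + 1) :
    (cell Q₀ N hN u').toSet ⊆ (block Q₀ N hN u i k).toSet := by
  have hl : (0:ℝ) < Q₀.side / N := div_pos Q₀.side_pos (by exact_mod_cast hN)
  refine toSet_subset _ _ fun j => ⟨?_, ?_⟩ <;>
    · simp only [cell, block]
      by_cases hj : j = i
      · subst hj
        simp only [if_pos rfl]
        rcases hi with hi | hi <;> rw [hi] <;> push_cast <;> nlinarith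
      · simp only [if_neg hj]
        have h1 : min (u j : ℕ) (N-2) ≤ (u' j : ℕ) := by
          rw [hoff j hj]; omega
        have h2 : (u' j : ℕ) + 1 ≤ min (u j : ℕ) (N-2) + 2 := by
          have := (u j).isLt
          rw [hoff j hj]; omega
        have h1' : ((min (u j : ℕ) (N-2) : ℕ) : ℝ) ≤ ((u' j : ℕ) : ℝ) := by exact_mod_cast h1
        have h2' : ((u' j : ℕ) : ℝ) + 1 ≤ ((min (u j : ℕ) (N-2) : ℕ) : ℝ) + 2 := by
          exact_mod_cast h2
        nlinarith

lemma block_disjoint (u : Fin n → Fin N) (i : Fin n) {k k' : ℕ}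
    (h : k + 2 ≤ k') :
    Disjoint (interior (block Q₀ N hN u i k).toSet)
      (interior (block Q₀ N hN u i k').toSet) := by
  have hl : (0:ℝ) < Q₀.side / N := div_pos Q₀.side_pos (by exact_mod_cast hN)
  refine disjoint_interior_of_coord _ _ i ?_
  show Q₀.corner i + _ * (Q₀.side / N) + 2 * (Q₀.side / N) ≤ Q₀.corner i + _ * (Q₀.side / N)
  simp only [block, if_pos rfl, if_true]
  have : (k:ℝ) + 2 ≤ (k':ℝ) := by exact_mod_cast h
  nlinarith

end grid

/-- sum of lintegrals over a packed family is at most the integral over `Q₀`. -/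
lemma sum_lintegral_packed {ι : Type*} (Q₀ : Cube n) (s : Finset ι) (R : ι → Cube n)
    (hsub : ∀ i ∈ s, (R i).toSet ⊆ Q₀.toSet)
    (hdisj : (s : Set ι).Pairwise fun i j =>
      Disjoint (interior (R i).toSet) (interior (R j).toSet))
    (h : (Fin n → ℝ) → ℝ≥0∞) :
    ∑ i ∈ s, ∫⁻ x in (R i).toSet, h x ≤ ∫⁻ x in Q₀.toSet, h x := by
  calc ∑ i ∈ s, ∫⁻ x in (R i).toSet, h x
      = ∑ i ∈ s, ∫⁻ x in interior (R i).toSet, h x :=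
        Finset.sum_congr rfl fun i _ => lintegral_toSet_eq_interior (R i) h
    _ = ∫⁻ x in ⋃ i ∈ s, interior (R i).toSet, h x :=
        (lintegral_biUnion_finset hdisj (fun i _ => isOpen_interior.measurableSet) h).symm
    _ ≤ ∫⁻ x in Q₀.toSet, h x := by
        refine lintegral_mono_set (Set.iUnion₂_subset fun i hi => ?_)
        exact interior_subset.trans (hsub i hi)

lemma volume_diff_interior (Q : Cube n) : volume (Q.toSet \ interior Q.toSet) = 0 := by
  have := measure_diff (interior_subset : interior Q.toSet ⊆ Q.toSet)
    (isOpen_interior.measurableSet).nullMeasurableSet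
    (by rw [volume_interior_toSet]; exact ofReal_ne_top)
  rw [this, volume_toSet, volume_interior_toSet, tsub_self]

/-- decomposition of the integral over `Q₀` into the grid cells. -/
lemma integral_eq_sum_cells (Q₀ : Cube n) (N : ℕ) (hN : 0 < N)
    (f : (Fin n → ℝ) → ℝ) (hf : IntegrableOn f Q₀.toSet) :
    ∫ x in Q₀.toSet, f x = ∑ v : Fin n → Fin N, ∫ x in (cell Q₀ N hN v).toSet, f x := by
  have hae : Q₀.toSet =ᵐ[volume] ⋃ v : Fin n → Fin N, interior (cell Q₀ N hN v).toSet := by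
    refine MeasureTheory.ae_eq_set.2 ⟨?_, ?_⟩
    · refine measure_mono_null (fun x hx => ?_)
        (measure_iUnion_null fun v : Fin n → Fin N => volume_diff_interior (cell Q₀ N hN v))
      obtain ⟨hx1, hx2⟩ := hx
      obtain ⟨v, hv⟩ := Set.mem_iUnion.1 (cell_cover Q₀ N hN hx1)
      refine Set.mem_iUnion.2 ⟨v, hv, fun hc => hx2 ?_⟩
      exact Set.mem_iUnion.2 ⟨v, hc⟩
    · refine measure_mono_null (fun x hx => ?_) (measure_empty (μ := volume))
      obtain ⟨hx1, hx2⟩ := hx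
      obtain ⟨v, hv⟩ := Set.mem_iUnion.1 hx1
      exact hx2 (cell_subset Q₀ N hN v (interior_subset hv))
  rw [setIntegral_congr_set hae,
    integral_iUnion (fun v => isOpen_interior.measurableSet)
      (fun v w hvw => cell_disjoint Q₀ N hN hvw)
      (hf.mono_set (Set.iUnion_subset fun v =>
        interior_subset.trans (cell_subset Q₀ N hN v))),
    tsum_fintype]
  exact Finset.sum_congr rfl fun v _ =>
    (setIntegral_congr_set (toSet_ae_eq_interior (cell Q₀ N hN v))).symm


section chain
variable (Q₀ : Cube n) (N : ℕ) (hN : 0 < N) (cf : ℝ) (f g : (Fin n → ℝ) → ℝ)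

/-- `gr S = (∫⁻_S ‖g‖)ᵣ`. -/
def gr (S : Set (Fin n → ℝ)) : ℝ := (∫⁻ x in S, (‖g x‖₊ : ℝ≥0∞)).toReal

lemma gr_nonneg (S : Set (Fin n → ℝ)) : 0 ≤ gr g S := ENNReal.toReal_nonneg

lemma cell_vol (v : Fin n → Fin N) : (cell Q₀ N hN v).vol = (Q₀.side / N) ^ n := rfl

variable (hcf : 0 ≤ cf) (hf : IntegrableOn f Q₀.toSet)
  (hGfin : ∫⁻ x in Q₀.toSet, (‖g x‖₊ : ℝ≥0∞) ≠ ⊤)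
  (H1 : ∀ Q : Cube n, Q.toSet ⊆ Q₀.toSet →
    ∫⁻ x in Q.toSet, (‖f x - Q.avg f‖₊ : ℝ≥0∞) ≤
      ENNReal.ofReal (cf * Q.side) * ∫⁻ x in Q.toSet, (‖g x‖₊ : ℝ≥0∞))

include hcf hf hGfin H1 in
/-- bound for the average deviation of a subcube of a cube `R ⊆ Q₀`. -/
lemma sub_avg_bound (S R : Cube n) (hSR : S.toSet ⊆ R.toSet) (hRQ : R.toSet ⊆ Q₀.toSet) :
    |S.avg f - R.avg f| ≤ cf * R.side * gr g R.toSet / S.vol := by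
  have h1 := abs_avg_sub_le f S R hSR (hf.mono_set hRQ)
  have hfin : ENNReal.ofReal (cf * R.side) * ∫⁻ x in R.toSet, (‖g x‖₊ : ℝ≥0∞) ≠ ⊤ := by
    exact ENNReal.mul_ne_top ofReal_ne_top
      (lt_of_le_of_lt (lintegral_mono_set hRQ) (lt_top_iff_ne_top.2 hGfin)).ne
  have h2 : (∫⁻ x in R.toSet, (‖f x - R.avg f‖₊ : ℝ≥0∞)).toReal ≤
      cf * R.side * gr g R.toSet := by
    have := ENNReal.toReal_mono hfin (H1 R hRQ)
    rwa [ENNReal.toReal_mul, ENNReal.toReal_ofReal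
      (mul_nonneg hcf R.side_pos.le)] at this
  calc |S.avg f - R.avg f| ≤
      (∫⁻ x in R.toSet, (‖f x - R.avg f‖₊ : ℝ≥0∞)).toReal / S.vol := h1
    _ ≤ cf * R.side * gr g R.toSet / S.vol := by
        gcongr
        exact (vol_pos S).le

include hcf hf hGfin H1 in
/-- single chain step between adjacent cells. -/
lemma step_bound (u : Fin n → Fin N) (i : Fin n) (k : ℕ) (hk : k + 2 ≤ N)
    (u₁ u₂ : Fin n → Fin N)
    (h1off : ∀ j, j ≠ i → (u₁ j : ℕ) = (u j : ℕ)) (h1i : (u₁ i : ℕ) = k)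
    (h2off : ∀ j, j ≠ i → (u₂ j : ℕ) = (u j : ℕ)) (h2i : (u₂ i : ℕ) = k + 1) :
    |(cell Q₀ N hN u₁).avg f - (cell Q₀ N hN u₂).avg f| ≤
      4 * cf * gr g (block Q₀ N hN u i k).toSet * (Q₀.side / N) / (Q₀.side / N) ^ n := by
  have hBQ := block_subset Q₀ N hN u i k hk
  have hc1 := cell_subset_block Q₀ N hN u i k hk u₁ h1off (Or.inl h1i)
  have hc2 := cell_subset_block Q₀ N hN u i k hk u₂ h2off (Or.inr h2i)
  have b1 := sub_avg_bound Q₀ cf f g hcf hf hGfin H1 (cell Q₀ N hN u₁)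
    (block Q₀ N hN u i k) hc1 hBQ
  have b2 := sub_avg_bound Q₀ cf f g hcf hf hGfin H1 (cell Q₀ N hN u₂)
    (block Q₀ N hN u i k) hc2 hBQ
  rw [cell_vol] at b1 b2
  rw [block_side] at b1 b2
  have tri := abs_sub_le ((cell Q₀ N hN u₁).avg f) ((block Q₀ N hN u i k).avg f)
    ((cell Q₀ N hN u₂).avg f)
  rw [abs_sub_comm ((block Q₀ N hN u i k).avg f)] at tri
  calc |(cell Q₀ N hN u₁).avg f - (cell Q₀ N hN u₂).avg f| ≤
      cf * (2 * (Q₀.side / N)) * gr g (block Q₀ N hN u i k).toSet / (Q₀.side / N) ^ n +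
      cf * (2 * (Q₀.side / N)) * gr g (block Q₀ N hN u i k).toSet / (Q₀.side / N) ^ n := by
        refine tri.trans (add_le_add b1 b2)
    _ = 4 * cf * gr g (block Q₀ N hN u i k).toSet * (Q₀.side / N) / (Q₀.side / N) ^ n := by
        ring

include hcf hf hGfin H1 in
/-- telescoping along one direction. -/
lemma dir_bound (u : Fin n → Fin N) (i : Fin n) (a b : Fin N) (hab : (a : ℕ) ≤ (b : ℕ)) :
    |(cell Q₀ N hN (Function.update u i a)).avg f -
        (cell Q₀ N hN (Function.update u i b)).avg f| ≤
      4 * cf * (Q₀.side / N) / (Q₀.side / N) ^ n *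
        ∑ k ∈ Finset.Ico (a : ℕ) (b : ℕ), gr g (block Q₀ N hN u i k).toSet := by
  have hl : (0:ℝ) < Q₀.side / N := div_pos Q₀.side_pos (by exact_mod_cast hN)
  have hcoef : (0:ℝ) ≤ 4 * cf * (Q₀.side / N) / (Q₀.side / N) ^ n := by positivity
  obtain ⟨m, hm⟩ : ∃ m : ℕ, (b : ℕ) = (a : ℕ) + m := ⟨(b : ℕ) - (a : ℕ), by omega⟩
  clear hab
  induction m generalizing b with
  | zero =>
    have : b = a := Fin.ext (by omega)
    subst this
    simp [Finset.Ico_self]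
  | succ m ih =>
    have hb' : (a : ℕ) + m < N := by have := b.isLt; omega
    set b' : Fin N := ⟨(a : ℕ) + m, hb'⟩ with hb'def
    have ihb := ih b' rfl
    have hk : ((a : ℕ) + m) + 2 ≤ N := by have := b.isLt; omega
    have hstep := step_bound Q₀ N hN cf f g hcf hf hGfin H1 u i ((a : ℕ) + m) hk
      (Function.update u i b') (Function.update u i b)
      (fun j hj => by rw [Function.update_of_ne hj])
      (by rw [Function.update_self])
      (fun j hj => by rw [Function.update_of_ne hj])
      (by rw [Function.update_self]; omega)
    have tri := abs_sub_le ((cell Q₀ N hN (Function.update u i a)).avg f)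
      ((cell Q₀ N hN (Function.update u i b')).avg f)
      ((cell Q₀ N hN (Function.update u i b)).avg f)
    rw [hm, ← Nat.add_assoc, Finset.sum_Ico_succ_top (by omega : (a:ℕ) ≤ (a:ℕ) + m),
      mul_add]
    refine tri.trans (add_le_add ihb (hstep.trans (le_of_eq ?_)))
    field_simp

include hN in
/-- sum of `gr` over the blocks of one direction, split by parity. -/
lemma dir_gr_sum (u : Fin n → Fin N) (i : Fin n) (a b : ℕ) (hb : b < N)
    (hGfin : ∫⁻ x in Q₀.toSet, (‖g x‖₊ : ℝ≥0∞) ≠ ⊤) :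
    ∑ k ∈ Finset.Ico a b, gr g (block Q₀ N hN u i k).toSet ≤ 2 * gr g Q₀.toSet := by
  have key : ∀ S : Finset ℕ, S ⊆ Finset.Ico a b →
      (∀ k ∈ S, ∀ k' ∈ S, k ≠ k' → (k + 2 ≤ k' ∨ k' + 2 ≤ k)) →
      ∑ k ∈ S, gr g (block Q₀ N hN u i k).toSet ≤ gr g Q₀.toSet := by
    intro S hS hpar
    have hsub : ∀ k ∈ S, (block Q₀ N hN u i k).toSet ⊆ Q₀.toSet := by
      intro k hk
      have := Finset.mem_Ico.1 (hS hk)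
      exact block_subset Q₀ N hN u i k (by omega)
    have hdisj : (S : Set ℕ).Pairwise fun k k' =>
        Disjoint (interior (block Q₀ N hN u i k).toSet)
          (interior (block Q₀ N hN u i k').toSet) := by
      intro k hk k' hk' hkk'
      rcases hpar k hk k' hk' hkk' with h | h
      · exact block_disjoint Q₀ N hN u i h
      · exact (block_disjoint Q₀ N hN u i h).symm
    have := sum_lintegral_packed Q₀ S (fun k => block Q₀ N hN u i k) hsub hdisj
      (fun x => (‖g x‖₊ : ℝ≥0∞))
    have hfin : ∀ k ∈ S, (∫⁻ x in (block Q₀ N hN u i k).toSet, (‖g x‖₊ : ℝ≥0∞)) ≠ ⊤ :=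
      fun k hk => (lt_of_le_of_lt (lintegral_mono_set (hsub k hk))
        (lt_top_iff_ne_top.2 hGfin)).ne
    calc ∑ k ∈ S, gr g (block Q₀ N hN u i k).toSet
        = (∑ k ∈ S, ∫⁻ x in (block Q₀ N hN u i k).toSet, (‖g x‖₊ : ℝ≥0∞)).toReal :=
          (ENNReal.toReal_sum hfin).symm
      _ ≤ gr g Q₀.toSet := ENNReal.toReal_mono hGfin this
  have hsplit := Finset.sum_filter_add_sum_filter_not (Finset.Ico a b)
    (fun k => Even k) (fun k => gr g (block Q₀ N hN u i k).toSet)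
  have h1 := key ((Finset.Ico a b).filter (fun k => Even k)) (Finset.filter_subset _ _)
    (by
      intro k hk k' hk' hne
      have h1 := (Finset.mem_filter.1 hk).2
      have h2 := (Finset.mem_filter.1 hk').2
      rcases h1 with ⟨c, hc⟩; rcases h2 with ⟨c', hc'⟩
      omega)
  have h2 := key ((Finset.Ico a b).filter (fun k => ¬ Even k)) (Finset.filter_subset _ _)
    (by
      intro k hk k' hk' hne
      have h1 := (Finset.mem_filter.1 hk).2
      have h2 := (Finset.mem_filter.1 hk').2
      rw [Nat.not_even_iff] at h1 h2
      omega)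
  rw [← hsplit]
  linarith


include hcf hf hGfin H1 in
/-- full bound for one direction. -/
lemma dir_full (u u' : Fin n → Fin N) (i : Fin n) (hoff : ∀ j, j ≠ i → u' j = u j) :
    |(cell Q₀ N hN u).avg f - (cell Q₀ N hN u').avg f| ≤
      8 * cf * (Q₀.side / N) / (Q₀.side / N) ^ n * gr g Q₀.toSet := by
  have hl : (0:ℝ) < Q₀.side / N := div_pos Q₀.side_pos (by exact_mod_cast hN)
  have hcoef : (0:ℝ) ≤ 4 * cf * (Q₀.side / N) / (Q₀.side / N) ^ n := by positivity
  have hu : Function.update u i (u i) = u := Function.update_eq_self i u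
  have hu' : Function.update u i (u' i) = u' := by
    funext j
    by_cases hj : j = i
    · subst hj; rw [Function.update_self]
    · rw [Function.update_of_ne hj, hoff j hj]
  have key : ∀ a b : Fin N, (a : ℕ) ≤ (b : ℕ) →
      |(cell Q₀ N hN (Function.update u i a)).avg f -
        (cell Q₀ N hN (Function.update u i b)).avg f| ≤
      8 * cf * (Q₀.side / N) / (Q₀.side / N) ^ n * gr g Q₀.toSet := by
    intro a b hab
    have h1 := dir_bound Q₀ N hN cf f g hcf hf hGfin H1 u i a b hab
    have h2 := dir_gr_sum Q₀ N hN g u i (a : ℕ) (b : ℕ) b.isLt hGfin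
    calc |(cell Q₀ N hN (Function.update u i a)).avg f -
        (cell Q₀ N hN (Function.update u i b)).avg f|
        ≤ 4 * cf * (Q₀.side / N) / (Q₀.side / N) ^ n *
            ∑ k ∈ Finset.Ico (a : ℕ) (b : ℕ), gr g (block Q₀ N hN u i k).toSet := h1
      _ ≤ 4 * cf * (Q₀.side / N) / (Q₀.side / N) ^ n * (2 * gr g Q₀.toSet) :=
          mul_le_mul_of_nonneg_left h2 hcoef
      _ = 8 * cf * (Q₀.side / N) / (Q₀.side / N) ^ n * gr g Q₀.toSet := by ring
  rcases le_total (u i : ℕ) (u' i : ℕ) with h | h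
  · have := key (u i) (u' i) h
    rwa [hu, hu'] at this
  · have := key (u' i) (u i) h
    rw [hu, hu'] at this
    rwa [abs_sub_comm] at this

include hcf hf hGfin H1 in
/-- the chain bound between any two cells. -/
lemma chain_bound (hn : 0 < n) (v w : Fin n → Fin N) :
    |(cell Q₀ N hN v).avg f - (cell Q₀ N hN w).avg f| ≤
      n * (8 * cf * (Q₀.side / N) / (Q₀.side / N) ^ n * gr g Q₀.toSet) := by
  set D : ℝ := 8 * cf * (Q₀.side / N) / (Q₀.side / N) ^ n * gr g Q₀.toSet with hD
  have hD0 : 0 ≤ D := by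
    have hl : (0:ℝ) < Q₀.side / N := div_pos Q₀.side_pos (by exact_mod_cast hN)
    have := gr_nonneg g Q₀.toSet
    positivity
  set interp : ℕ → Fin n → Fin N := fun k j => if (j : ℕ) < k then w j else v j with hinterp
  have h0 : interp 0 = v := by funext j; simp [hinterp]
  have hn' : interp n = w := by
    funext j
    simp [hinterp, j.isLt]
  have key : ∀ k : ℕ, |(cell Q₀ N hN (interp 0)).avg f -
      (cell Q₀ N hN (interp k)).avg f| ≤ k * D := by
    intro k
    induction k with
    | zero => simp
    | succ k ih =>
      have i : Fin n := ⟨0, hn⟩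
      set i : Fin n := if h : k < n then ⟨k, h⟩ else ⟨0, hn⟩ with hi
      have hoff : ∀ j, j ≠ i → interp (k+1) j = interp k j := by
        intro j hj
        by_cases h : k < n
        · have hji : (j : ℕ) ≠ k := by
            intro hjk
            apply hj
            rw [hi, dif_pos h]
            exact Fin.ext hjk
          simp only [hinterp]
          rcases Nat.lt_or_ge (j : ℕ) k with h' | h'
          · rw [if_pos h', if_pos (by omega)]
          · rw [if_neg (by omega), if_neg (by omega)]
        · have hjn := j.isLt
          simp only [hinterp]
          rw [if_pos (by omega), if_pos (by omega)]
      have hstep := dir_full Q₀ N hN cf f g hcf hf hGfin H1 (interp k) (interp (k+1)) i hoff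
      have tri := abs_sub_le ((cell Q₀ N hN (interp 0)).avg f)
        ((cell Q₀ N hN (interp k)).avg f) ((cell Q₀ N hN (interp (k+1))).avg f)
      have : |(cell Q₀ N hN (interp k)).avg f - (cell Q₀ N hN (interp (k+1))).avg f| ≤ D :=
        hstep
      calc |(cell Q₀ N hN (interp 0)).avg f - (cell Q₀ N hN (interp (k+1))).avg f|
          ≤ _ + _ := tri
        _ ≤ k * D + D := add_le_add ih this
        _ = (k + 1 : ℕ) * D := by push_cast; ring
  have := key n
  rwa [h0, hn'] at this

include hcf hf hGfin H1 in
/-- each cell average is close to the global average. -/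
lemma cell_avg_global (hn : 0 < n) (v : Fin n → Fin N) :
    |(cell Q₀ N hN v).avg f - Q₀.avg f| ≤
      n * (8 * cf * (Q₀.side / N) / (Q₀.side / N) ^ n * gr g Q₀.toSet) := by
  set D : ℝ := n * (8 * cf * (Q₀.side / N) / (Q₀.side / N) ^ n * gr g Q₀.toSet) with hD
  have hl : (0:ℝ) < Q₀.side / N := div_pos Q₀.side_pos (by exact_mod_cast hN)
  have hN0 : (0:ℝ) < (N:ℝ)^n := by positivity
  have hln : ((Q₀.side / N) ^ n : ℝ) ≠ 0 := by positivity
  have hvol : Q₀.vol = (N:ℝ)^n * (Q₀.side / N) ^ n := by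
    rw [Cube.vol, ← mul_pow]
    congr 1
    exact side_eq_N_mul Q₀ N hN
  have havg : Q₀.avg f = (∑ w : Fin n → Fin N, (cell Q₀ N hN w).avg f) / (N : ℝ) ^ n := by
    rw [Cube.avg, integral_eq_sum_cells Q₀ N hN f hf, hvol]
    have he : ∀ w : Fin n → Fin N, ∫ x in (cell Q₀ N hN w).toSet, f x =
        (cell Q₀ N hN w).avg f * (Q₀.side / N) ^ n := by
      intro w
      rw [Cube.avg, cell_vol]
      exact (div_mul_cancel₀ _ hln).symm
    rw [Finset.sum_congr rfl fun w _ => he w, ← Finset.sum_mul,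
      mul_comm ((N:ℝ)^n), ← div_div, mul_div_cancel_right₀ _ hln]
  have hcard : (((Finset.univ : Finset (Fin n → Fin N)).card : ℕ) : ℝ) = (N : ℝ) ^ n := by
    rw [Finset.card_univ, Fintype.card_fun]
    push_cast
    simp
  have hsum : ∑ w : Fin n → Fin N, ((cell Q₀ N hN v).avg f - (cell Q₀ N hN w).avg f) =
      (N:ℝ)^n * (cell Q₀ N hN v).avg f - ∑ w : Fin n → Fin N, (cell Q₀ N hN w).avg f := by
    rw [Finset.sum_sub_distrib, Finset.sum_const, nsmul_eq_mul, hcard]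
  have hkey : (cell Q₀ N hN v).avg f - Q₀.avg f =
      (∑ w : Fin n → Fin N, ((cell Q₀ N hN v).avg f - (cell Q₀ N hN w).avg f)) / (N:ℝ)^n := by
    rw [hsum, sub_div, mul_div_cancel_left₀ _ hN0.ne', havg]
  rw [hkey, abs_div, abs_of_pos hN0, div_le_iff₀ hN0]
  calc |∑ w : Fin n → Fin N, ((cell Q₀ N hN v).avg f - (cell Q₀ N hN w).avg f)|
      ≤ ∑ w : Fin n → Fin N, |(cell Q₀ N hN v).avg f - (cell Q₀ N hN w).avg f| :=
        Finset.abs_sum_le_sum_abs _ _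
    _ ≤ ∑ _w : Fin n → Fin N, D :=
        Finset.sum_le_sum fun w _ => chain_bound Q₀ N hN cf f g hcf hf hGfin H1 hn v w
    _ = (((Finset.univ : Finset (Fin n → Fin N)).card : ℕ) : ℝ) * D := by
        rw [Finset.sum_const, nsmul_eq_mul]
    _ = D * (N:ℝ)^n := by rw [hcard]; ring

end chain
end GNaux

set_option maxHeartbeats 2000000 in
open GNaux in
/-- If `f ∈ L¹(Q₀)` satisfies the `(1,1)` Poincaré inequality with
constant `c(f)` and `g ∈ L¹(Q₀)`, then there is a constant `c(n)` (depending on `n` and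
`c(f)`) with `‖f - f_{Q₀}‖*_{L(n',∞)} ≤ c(n) ‖g‖_{L¹(Q₀)}`, where `1/n' = 1 - 1/n`
(a weak type Gagliardo–Nirenberg inequality). -/
theorem weak_gagliardo_nirenberg (n : ℕ) (hn : 0 < n) (cf : ℝ) (hcf : 0 ≤ cf) :
    ∃ C : ℝ, 0 < C ∧
      ∀ (Q₀ : Cube n) (f g : (Fin n → ℝ) → ℝ),
        IntegrableOn f Q₀.toSet → IntegrableOn g Q₀.toSet →
        (∀ Q : Cube n, Q.toSet ⊆ Q₀.toSet →
          (ENNReal.ofReal Q.vol)⁻¹ * ∫⁻ x in Q.toSet, (‖f x - Q.avg f‖₊ : ℝ≥0∞) ≤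
            ENNReal.ofReal (cf * Q.vol ^ ((n : ℝ)⁻¹)) *
              ((ENNReal.ofReal Q.vol)⁻¹ * ∫⁻ x in Q.toSet, (‖g x‖₊ : ℝ≥0∞))) →
        weakNorm (volume.restrict Q₀.toSet) ((1 - (n : ℝ)⁻¹)⁻¹)
            (fun x => f x - Q₀.avg f) ≤
          ENNReal.ofReal C * ∫⁻ x in Q₀.toSet, (‖g x‖₊ : ℝ≥0∞) := by
  have hn' : (1:ℝ) ≤ n := by exact_mod_cast hn
  have hnne : (n:ℝ) ≠ 0 := by positivity
  refine ⟨16 * (n+1) * (cf+1) * 2^n, by positivity, ?_⟩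
  intro Q₀ f g hf hg hp
  set μ := volume.restrict Q₀.toSet with hμ
  set F : (Fin n → ℝ) → ℝ := fun x => f x - Q₀.avg f with hF
  set G := ∫⁻ x in Q₀.toSet, (‖g x‖₊ : ℝ≥0∞) with hGdef
  have hGfin : G ≠ ⊤ := hg.2.ne
  have H1 := osc_le hn cf Q₀ f g hp
  have hFint : IntegrableOn F Q₀.toSet :=
    hf.sub (integrableOn_const (by rw [volume_toSet]; exact ofReal_ne_top))
  have hexp : 1 / ((1 - (n : ℝ)⁻¹)⁻¹) = 1 - (n:ℝ)⁻¹ := by rw [one_div, inv_inv]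
  set e : ℝ := 1 - (n:ℝ)⁻¹ with he
  have he0 : 0 ≤ e := by
    rw [he, sub_nonneg]
    exact inv_le_one_of_one_le₀ hn'
  rw [weakNorm, hexp]
  refine iSup₂_le fun t ht => ?_
  rw [Set.mem_Ioi] at ht
  have hzero_case : rearr μ F t ≤ 0 →
      ENNReal.ofReal t ^ e * rearr μ F t ≤ ENNReal.ofReal (16 * (n+1) * (cf+1) * 2^n) * G := by
    intro h
    rw [le_zero_iff.1 h, mul_zero]
    exact zero_le
  by_cases h0 : ∫⁻ x in Q₀.toSet, (‖f x - Q₀.avg f‖₊ : ℝ≥0∞) = 0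
  · refine hzero_case ?_
    have haem : AEMeasurable (fun x => (‖F x‖₊ : ℝ≥0∞)) μ := hFint.1.enorm
    have hae : (fun x => (‖F x‖₊ : ℝ≥0∞)) =ᵐ[μ] 0 := (lintegral_eq_zero_iff' haem).1 h0
    have hnull : μ {x | (0:ℝ≥0∞) < (‖F x‖₊ : ℝ≥0∞)} = 0 := by
      have := ae_iff.1 hae
      refine measure_mono_null ?_ this
      intro x hx
      simp only [Set.mem_setOf_eq] at hx ⊢
      exact fun hc => hx.ne' hc
    refine sInf_le ?_
    rw [Set.mem_setOf_eq, hnull]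
    exact zero_le
  · have hG0 : G ≠ 0 := by
      intro h
      refine h0 (le_zero_iff.1 ?_)
      have := H1 Q₀ subset_rfl
      rwa [← hGdef, h, mul_zero] at this
    have hcf0 : 0 < cf := by
      rcases lt_or_eq_of_le hcf with h | h
      · exact h
      · exfalso
        refine h0 (le_zero_iff.1 ?_)
        have := H1 Q₀ subset_rfl
        rwa [← h, zero_mul, ENNReal.ofReal_zero, zero_mul] at this
    set Gr := G.toReal with hGr
    have hGr0 : 0 < Gr := ENNReal.toReal_pos hG0 hGfin
    have hGofReal : ENNReal.ofReal Gr = G := ENNReal.ofReal_toReal hGfin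
    have hgrQ : gr g Q₀.toSet = Gr := rfl
    clear_value Gr
    rcases le_or_gt Q₀.vol t with hbig | hsmall
    · refine hzero_case ?_
      refine sInf_le ?_
      rw [Set.mem_setOf_eq]
      calc μ {x | (0:ℝ≥0∞) < (‖F x‖₊ : ℝ≥0∞)} ≤ μ Set.univ := measure_mono (Set.subset_univ _)
        _ = volume Q₀.toSet := by rw [hμ, Measure.restrict_apply_univ]
        _ = ENNReal.ofReal Q₀.vol := volume_toSet Q₀
        _ ≤ ENNReal.ofReal t := ENNReal.ofReal_le_ofReal hbig
    · -- main case
      set s : ℝ := t ^ ((n:ℝ)⁻¹) with hs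
      have hs0 : 0 < s := Real.rpow_pos_of_pos ht _
      have hsn : s ^ (n:ℕ) = t := by
        rw [hs, ← Real.rpow_natCast (t ^ ((n:ℝ)⁻¹)) n, ← Real.rpow_mul ht.le,
          inv_mul_cancel₀ hnne, Real.rpow_one]
      have hslt : s < Q₀.side := by
        by_contra hc
        push_neg at hc
        have := pow_le_pow_left₀ Q₀.side_pos.le hc n
        rw [hsn] at this
        exact absurd (lt_of_lt_of_le hsmall this) (lt_irrefl _)
      set N : ℕ := ⌈Q₀.side / s⌉₊ with hNdef
      have hN : 0 < N := Nat.ceil_pos.2 (div_pos Q₀.side_pos hs0)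
      have hNs : Q₀.side / s ≤ N := Nat.le_ceil _
      have hds1 : 1 < Q₀.side / s := (one_lt_div hs0).2 hslt
      have hN2 : (N:ℝ) ≤ 2 * (Q₀.side / s) := by
        have h1 : (N:ℝ) < Q₀.side / s + 1 := Nat.ceil_lt_add_one (by linarith)
        linarith
      set l : ℝ := Q₀.side / N with hl
      have hNpos : (0:ℝ) < N := by exact_mod_cast hN
      have hl0 : 0 < l := div_pos Q₀.side_pos hNpos
      have hNs' : Q₀.side ≤ N * s := by
        rw [div_le_iff₀ hs0] at hNs
        linarith
      have hls : l ≤ s := by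
        rw [hl, div_le_iff₀ hNpos]
        linarith
      have hN2' : (N:ℝ) * s ≤ 2 * Q₀.side := by
        have hcc : Q₀.side / s * s = Q₀.side := div_mul_cancel₀ _ hs0.ne'
        nlinarith
      have hsl : s ≤ 2 * l := by
        rw [hl, show (2:ℝ) * (Q₀.side / N) = 2 * Q₀.side / N from (mul_div_assoc _ _ _).symm,
          le_div_iff₀ hNpos]
        nlinarith
      have hlnt : l ^ (n:ℕ) ≤ t := by
        rw [← hsn]
        exact pow_le_pow_left₀ hl0.le hls n
      set D : ℝ := (n:ℝ) * (8 * cf * (Q₀.side / N) / (Q₀.side / N) ^ n * Gr) with hD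
      have hD0 : 0 < D := by
        rw [hD]
        have : (0:ℝ) < (n:ℝ) := by positivity
        have h8 : (0:ℝ) < 8 * cf * (Q₀.side / N) / (Q₀.side / N) ^ n := by
          rw [← hl]
          positivity
        rw [← hl]
        positivity
      set lam : ℝ := 2 * D with hlam
      have hlam0 : 0 < lam := by positivity
      have hDl : D = n * (8 * cf * l / l ^ (n:ℕ) * Gr) := by rw [hD, ← hl]
      have hlnpos : (0:ℝ) < l ^ (n:ℕ) := by positivity
      have hcellsub : ∀ v : Fin n → Fin N, (cell Q₀ N hN v).toSet ⊆ Q₀.toSet :=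
        cell_subset Q₀ N hN
      have hcell_global : ∀ v : Fin n → Fin N, |(cell Q₀ N hN v).avg f - Q₀.avg f| ≤ D := by
        intro v
        have h := cell_avg_global Q₀ N hN cf f g hcf hf hGfin H1 hn v
        rw [hgrQ] at h
        rw [hD]
        exact h
      -- the distribution estimate
      have claim : μ {x | ENNReal.ofReal lam < (‖F x‖₊ : ℝ≥0∞)} ≤ ENNReal.ofReal t := by
        have hsub2 : ∀ v : Fin n → Fin N,
            {x | ENNReal.ofReal lam < (‖F x‖₊ : ℝ≥0∞)} ∩ (cell Q₀ N hN v).toSet ⊆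
            {x | ENNReal.ofReal D ≤ (‖f x - (cell Q₀ N hN v).avg f‖₊ : ℝ≥0∞)} ∩
              (cell Q₀ N hN v).toSet := by
          intro v x hx
          obtain ⟨hx1, hx2⟩ := hx
          refine ⟨?_, hx2⟩
          rw [Set.mem_setOf_eq, ← enorm_eq_nnnorm, Real.enorm_eq_ofReal_abs] at hx1 ⊢
          rw [ENNReal.ofReal_lt_ofReal_iff_of_nonneg hlam0.le] at hx1
          refine ENNReal.ofReal_le_ofReal ?_
          have htri : |F x| ≤ |f x - (cell Q₀ N hN v).avg f| +
              |(cell Q₀ N hN v).avg f - Q₀.avg f| := by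
            have hsplit : F x = (f x - (cell Q₀ N hN v).avg f) +
                ((cell Q₀ N hN v).avg f - Q₀.avg f) := by rw [hF]; ring
            rw [hsplit]
            exact abs_add_le _ _
          have hcg := hcell_global v
          have hlam2 : lam = 2 * D := hlam
          linarith
        have hmark : ∀ v : Fin n → Fin N,
            volume ({x | ENNReal.ofReal D ≤ (‖f x - (cell Q₀ N hN v).avg f‖₊ : ℝ≥0∞)} ∩
              (cell Q₀ N hN v).toSet) ≤
            (ENNReal.ofReal D)⁻¹ * (ENNReal.ofReal (cf * l) *
              ∫⁻ x in (cell Q₀ N hN v).toSet, (‖g x‖₊ : ℝ≥0∞)) := by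
          intro v
          have hint : IntegrableOn (fun x => f x - (cell Q₀ N hN v).avg f)
              (cell Q₀ N hN v).toSet := (hf.mono_set (hcellsub v)).sub
            (integrableOn_const (by rw [volume_toSet]; exact ofReal_ne_top))
          have haem : AEMeasurable (fun x => (‖f x - (cell Q₀ N hN v).avg f‖₊ : ℝ≥0∞))
              (volume.restrict (cell Q₀ N hN v).toSet) := hint.1.enorm
          have hm := mul_meas_ge_le_lintegral₀ haem (ENNReal.ofReal D)
          rw [Measure.restrict_apply' (measurableSet_toSet _)] at hm
          have hD0' : ENNReal.ofReal D ≠ 0 := (ENNReal.ofReal_pos.2 hD0).ne'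
          have hH := H1 (cell Q₀ N hN v) (hcellsub v)
          rw [show (cell Q₀ N hN v).side = l from rfl] at hH
          calc volume ({x | ENNReal.ofReal D ≤ (‖f x - (cell Q₀ N hN v).avg f‖₊ : ℝ≥0∞)} ∩
              (cell Q₀ N hN v).toSet)
              = (ENNReal.ofReal D)⁻¹ * (ENNReal.ofReal D *
                volume ({x | ENNReal.ofReal D ≤ (‖f x - (cell Q₀ N hN v).avg f‖₊ : ℝ≥0∞)} ∩
                  (cell Q₀ N hN v).toSet)) := by
                rw [← mul_assoc, ENNReal.inv_mul_cancel hD0' ofReal_ne_top, one_mul]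
            _ ≤ (ENNReal.ofReal D)⁻¹ *
                  ∫⁻ x in (cell Q₀ N hN v).toSet, (‖f x - (cell Q₀ N hN v).avg f‖₊ : ℝ≥0∞) :=
                mul_le_mul_right hm _
            _ ≤ (ENNReal.ofReal D)⁻¹ * (ENNReal.ofReal (cf * l) *
                  ∫⁻ x in (cell Q₀ N hN v).toSet, (‖g x‖₊ : ℝ≥0∞)) :=
                mul_le_mul_right hH _
        have hcover : {x | ENNReal.ofReal lam < (‖F x‖₊ : ℝ≥0∞)} ∩ Q₀.toSet ⊆
            ⋃ v : Fin n → Fin N,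
              ({x | ENNReal.ofReal lam < (‖F x‖₊ : ℝ≥0∞)} ∩ (cell Q₀ N hN v).toSet) := by
          intro x hx
          obtain ⟨hx1, hx2⟩ := hx
          obtain ⟨v, hv⟩ := Set.mem_iUnion.1 (cell_cover Q₀ N hN hx2)
          exact Set.mem_iUnion.2 ⟨v, hx1, hv⟩
        have hpacked := sum_lintegral_packed Q₀ Finset.univ (fun v => cell Q₀ N hN v)
          (fun v _ => hcellsub v)
          (fun v _ w _ hvw => cell_disjoint Q₀ N hN hvw) (fun x => (‖g x‖₊ : ℝ≥0∞))
        have hreal : cf * l * Gr ≤ D * t := by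
          have hDln : D * l ^ (n:ℕ) = 8 * n * cf * l * Gr := by
            rw [hDl]
            field_simp
          have hDt : D * l ^ (n:ℕ) ≤ D * t := mul_le_mul_of_nonneg_left hlnt hD0.le
          have hX : (0:ℝ) < cf * l * Gr := by positivity
          have h8n : cf * l * Gr ≤ 8 * n * cf * l * Gr := by
            nlinarith [mul_nonneg (by linarith : (0:ℝ) ≤ 8 * (n:ℝ) - 1) hX.le]
          linarith
        calc μ {x | ENNReal.ofReal lam < (‖F x‖₊ : ℝ≥0∞)}
            = volume ({x | ENNReal.ofReal lam < (‖F x‖₊ : ℝ≥0∞)} ∩ Q₀.toSet) := by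
              rw [hμ, Measure.restrict_apply' (measurableSet_toSet Q₀)]
          _ ≤ volume (⋃ v : Fin n → Fin N,
                ({x | ENNReal.ofReal lam < (‖F x‖₊ : ℝ≥0∞)} ∩ (cell Q₀ N hN v).toSet)) :=
              measure_mono hcover
          _ ≤ ∑' v : Fin n → Fin N,
                volume ({x | ENNReal.ofReal lam < (‖F x‖₊ : ℝ≥0∞)} ∩ (cell Q₀ N hN v).toSet) :=
              measure_iUnion_le _
          _ = ∑ v : Fin n → Fin N,
                volume ({x | ENNReal.ofReal lam < (‖F x‖₊ : ℝ≥0∞)} ∩ (cell Q₀ N hN v).toSet) :=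
              tsum_fintype _
          _ ≤ ∑ v : Fin n → Fin N,
                volume ({x | ENNReal.ofReal D ≤ (‖f x - (cell Q₀ N hN v).avg f‖₊ : ℝ≥0∞)} ∩
                  (cell Q₀ N hN v).toSet) :=
              Finset.sum_le_sum fun v _ => measure_mono (hsub2 v)
          _ ≤ ∑ v : Fin n → Fin N, (ENNReal.ofReal D)⁻¹ * (ENNReal.ofReal (cf * l) *
                ∫⁻ x in (cell Q₀ N hN v).toSet, (‖g x‖₊ : ℝ≥0∞)) :=
              Finset.sum_le_sum fun v _ => hmark v
          _ = (ENNReal.ofReal D)⁻¹ * ENNReal.ofReal (cf * l) *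
                ∑ v : Fin n → Fin N, ∫⁻ x in (cell Q₀ N hN v).toSet, (‖g x‖₊ : ℝ≥0∞) := by
              rw [Finset.mul_sum]
              exact Finset.sum_congr rfl fun v _ => by rw [mul_assoc]
          _ ≤ (ENNReal.ofReal D)⁻¹ * ENNReal.ofReal (cf * l) * G :=
              mul_le_mul_right hpacked _
          _ = (ENNReal.ofReal D)⁻¹ * ENNReal.ofReal (cf * l * Gr) := by
              rw [← hGofReal, mul_assoc, ← ENNReal.ofReal_mul (by positivity)]
          _ ≤ (ENNReal.ofReal D)⁻¹ * (ENNReal.ofReal D * ENNReal.ofReal t) := by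
              refine mul_le_mul_right ?_ _
              rw [← ENNReal.ofReal_mul hD0.le]
              exact ENNReal.ofReal_le_ofReal hreal
          _ = ENNReal.ofReal t := by
              rw [← mul_assoc, ENNReal.inv_mul_cancel
                ((ENNReal.ofReal_pos.2 hD0).ne') ofReal_ne_top, one_mul]
      have hrearr : rearr μ F t ≤ ENNReal.ofReal lam := sInf_le claim
      -- final arithmetic
      have harith : t ^ e * lam ≤ 16 * (n+1) * (cf+1) * 2^n * Gr := by
        have hne2 : (n:ℝ) * e = (n:ℝ) - 1 := by
          rw [he, mul_sub, mul_inv_cancel₀ hnne, mul_one]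
        have h1 : t ^ e = s ^ ((n:ℝ)-1) := by
          rw [← hsn, ← Real.rpow_natCast s n, ← Real.rpow_mul hs0.le, hne2]
        have h2 : s ^ ((n:ℝ)-1) ≤ (2*l) ^ ((n:ℝ)-1) :=
          Real.rpow_le_rpow hs0.le hsl (by linarith)
        have h3 : (2*l) ^ ((n:ℝ)-1) = 2 ^ ((n:ℝ)-1) * l ^ ((n:ℝ)-1) :=
          Real.mul_rpow (by norm_num) hl0.le
        have h4 : l ^ ((n:ℝ)-1) * l = l ^ (n:ℕ) := by
          rw [← Real.rpow_natCast l n]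
          calc l ^ ((n:ℝ)-1) * l = l ^ ((n:ℝ)-1) * l ^ (1:ℝ) := by rw [Real.rpow_one]
            _ = l ^ ((n:ℝ)-1+1) := (Real.rpow_add hl0 _ _).symm
            _ = l ^ (n:ℝ) := by ring_nf
        have h5 : (2:ℝ) ^ ((n:ℝ)-1) ≤ 2 ^ (n:ℕ) := by
          rw [← Real.rpow_natCast 2 n]
          exact Real.rpow_le_rpow_of_exponent_le one_le_two (by linarith)
        have h5' : (0:ℝ) ≤ (2:ℝ) ^ ((n:ℝ)-1) := (Real.rpow_pos_of_pos two_pos _).le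
        have hratio : l ^ ((n:ℝ)-1) * l / l ^ (n:ℕ) = 1 := by
          rw [h4]
          exact div_self hlnpos.ne'
        calc t ^ e * lam = s ^ ((n:ℝ)-1) * lam := by rw [h1]
          _ ≤ (2*l) ^ ((n:ℝ)-1) * lam := mul_le_mul_of_nonneg_right h2 hlam0.le
          _ = 2 ^ ((n:ℝ)-1) * (16*n*cf*Gr) * (l ^ ((n:ℝ)-1) * l / l ^ (n:ℕ)) := by
              rw [h3, hlam, hDl]
              ring
          _ = 2 ^ ((n:ℝ)-1) * (16*n*cf*Gr) := by rw [hratio, mul_one]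
          _ ≤ 2 ^ (n:ℕ) * (16*n*cf*Gr) :=
              mul_le_mul_of_nonneg_right (by exact h5) (by positivity)
          _ ≤ 16 * (n+1) * (cf+1) * 2^n * Gr := by
              have h2n : (0:ℝ) ≤ 16 * 2^(n:ℕ) * Gr := by positivity
              have hfac : (n:ℝ) * cf ≤ (n+1) * (cf+1) := by nlinarith
              nlinarith [mul_le_mul_of_nonneg_right hfac h2n]
      calc ENNReal.ofReal t ^ e * rearr μ F t
          ≤ ENNReal.ofReal t ^ e * ENNReal.ofReal lam := mul_le_mul_right hrearr _
        _ = ENNReal.ofReal (t ^ e * lam) := by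
            rw [ENNReal.ofReal_rpow_of_pos ht, ← ENNReal.ofReal_mul (by positivity)]
        _ ≤ ENNReal.ofReal (16 * (n+1) * (cf+1) * 2^n * Gr) := ENNReal.ofReal_le_ofReal harith
        _ = ENNReal.ofReal (16 * (n+1) * (cf+1) * 2^n) * ENNReal.ofReal Gr := by
            rw [← ENNReal.ofReal_mul (by positivity)]
        _ = ENNReal.ofReal (16 * (n+1) * (cf+1) * 2^n) * G := by rw [hGofReal]

end
end
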